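/- arXiv:2407.17641 — 10 statements merged into one kernel-verified Lean document; each statement's English description precedes it below -/
import Mathlib

section
/- Let F = ⟨Q, Σ, δ, I, F⟩ be an NFA, and let F × F be its product automaton with state set Q × Q, initial states I × I, accepting states F × F, and transitions (k,l) ∈ δ'((i,j), x) iff k ∈ δ(i,x) and l ∈ δ(j,x). Then F is unambiguous if and only if every state (m,n) ∈ Q × Q with m ≠ n is useless in F × F, i.e. there is no word u making (m,n) accessible from an initial state together with a word v leading from (m,n) to an accepting state. -/
/-- A nondeterministic finite automaton with alphabet `α` and state type `σ`. -/
structure FinNFA (α σ : Type*) where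
  step : σ → α → Finset σ
  start : Finset σ
  accept : Finset σ

/-- The type of accepting paths of the NFA `M` on the word `w`. -/
def AcceptingPath {α σ : Type*} (M : FinNFA α σ) (w : List α) : Type _ :=
  { r : Fin (w.length + 1) → σ //
      r 0 ∈ M.start ∧ r (Fin.last w.length) ∈ M.accept ∧
      ∀ k : Fin w.length, r k.succ ∈ M.step (r k.castSucc) (w.get k) }

/-- The product automaton `F × F`, with states `Q × Q`, initial states `I × I`,
accepting states `F × F`, and `(k,l) ∈ δ'((i,j),x)` iff `k ∈ δ(i,x)` and `l ∈ δ(j,x)`. -/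
def prodNFA {α σ : Type*} (M : FinNFA α σ) : FinNFA α (σ × σ) where
  step := fun p x => (M.step p.1 x) ×ˢ (M.step p.2 x)
  start := M.start ×ˢ M.start
  accept := M.accept ×ˢ M.accept

/-- State `q` is accessible from an initial state by reading some word. -/
def Accessible {α σ : Type*} (M : FinNFA α σ) (q : σ) : Prop :=
  ∃ (w : List α) (r : Fin (w.length + 1) → σ),
    r 0 ∈ M.start ∧ r (Fin.last w.length) = q ∧
    ∀ k : Fin w.length, r k.succ ∈ M.step (r k.castSucc) (w.get k)

/-- Some accepting state is reachable from `q` by reading some word. -/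
def Coaccessible {α σ : Type*} (M : FinNFA α σ) (q : σ) : Prop :=
  ∃ (w : List α) (r : Fin (w.length + 1) → σ),
    r 0 = q ∧ r (Fin.last w.length) ∈ M.accept ∧
    ∀ k : Fin w.length, r k.succ ∈ M.step (r k.castSucc) (w.get k)

/-- A state is useful if it is accessible and coaccessible; otherwise useless. -/
def Useful {α σ : Type*} (M : FinNFA α σ) (q : σ) : Prop :=
  Accessible M q ∧ Coaccessible M q

def Steps {α σ : Type*} (M : FinNFA α σ) : σ → List α → σ → Prop
  | p, [], q => p = q
  | p, a :: w, q => ∃ p', p' ∈ M.step p a ∧ Steps M p' w q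

theorem steps_to_path {α σ : Type*} {M : FinNFA α σ} :
    ∀ {w : List α} {p q : σ}, Steps M p w q →
      ∃ r : Fin (w.length + 1) → σ, r 0 = p ∧ r (Fin.last w.length) = q ∧
        ∀ k : Fin w.length, r k.succ ∈ M.step (r k.castSucc) (w.get k)
  | [], p, q, h => ⟨fun _ => p, rfl, h ▸ rfl, fun k => k.elim0⟩
  | a :: w, p, q, ⟨p', hp', h⟩ => by
    obtain ⟨r, hr0, hrl, hrs⟩ := steps_to_path h
    refine ⟨Fin.cases p r, by simp, ?_, ?_⟩
    · show Fin.cases p r ((Fin.last w.length).succ) = q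
      rw [Fin.cases_succ]; exact hrl
    · intro k
      refine Fin.cases ?_ ?_ k
      · show Fin.cases p r ((0 : Fin (w.length+1)).succ) ∈
          M.step (Fin.cases p r ((0 : Fin (w.length+1)).castSucc)) ((a :: w).get ⟨0, Nat.succ_pos _⟩)
        rw [Fin.cases_succ, Fin.castSucc_zero, Fin.cases_zero, hr0]
        exact hp'
      · intro j
        show Fin.cases p r (j.succ.succ) ∈
          M.step (Fin.cases p r (j.succ.castSucc)) ((a :: w).get j.succ)
        rw [Fin.cases_succ, ← Fin.succ_castSucc, Fin.cases_succ]
        exact hrs j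

theorem path_steps_aux {α σ : Type*} {M : FinNFA α σ} {w : List α} {r : Fin (w.length + 1) → σ}
    (hrs : ∀ k : Fin w.length, r k.succ ∈ M.step (r k.castSucc) (w.get k)) :
    ∀ (d i j : ℕ) (hij : i ≤ j) (hj : j ≤ w.length), j - i = d →
      Steps M (r ⟨i, by omega⟩) ((w.drop i).take (j - i)) (r ⟨j, by omega⟩) := by
  intro d
  induction d with
  | zero =>
    intro i j hij hj hd
    have : i = j := by omega
    subst this
    simp only [Nat.sub_self, List.take_zero]
    exact rfl
  | succ d ih =>
    intro i j hij hj hd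
    have hi : i < w.length := by omega
    have heq : (w.drop i).take (j - i) = w[i] :: ((w.drop (i+1)).take (j - (i+1))) := by
      rw [List.drop_eq_getElem_cons hi]
      have : j - i = (j - (i+1)) + 1 := by omega
      rw [this, List.take_succ_cons]
    rw [heq]
    refine ⟨r ⟨i+1, by omega⟩, ?_, ?_⟩
    · exact hrs ⟨i, hi⟩
    · exact ih (i+1) j (by omega) (by omega) (by omega)

theorem path_steps {α σ : Type*} {M : FinNFA α σ} {w : List α} {r : Fin (w.length + 1) → σ}
    (hrs : ∀ k : Fin w.length, r k.succ ∈ M.step (r k.castSucc) (w.get k))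
    (i j : ℕ) (hij : i ≤ j) (hj : j ≤ w.length) :
    Steps M (r ⟨i, by omega⟩) ((w.drop i).take (j - i)) (r ⟨j, by omega⟩) :=
  path_steps_aux hrs (j - i) i j hij hj rfl

theorem path_append {α σ : Type*} {M : FinNFA α σ} {u v : List α}
    (r : Fin (u.length + 1) → σ) (s : Fin (v.length + 1) → σ)
    (hrs : ∀ k : Fin u.length, r k.succ ∈ M.step (r k.castSucc) (u.get k))
    (hss : ∀ k : Fin v.length, s k.succ ∈ M.step (s k.castSucc) (v.get k))
    (hmid : r (Fin.last u.length) = s 0) :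
    ∃ t : Fin ((u ++ v).length + 1) → σ, t 0 = r 0 ∧
      t (Fin.last (u ++ v).length) = s (Fin.last v.length) ∧
      t ⟨u.length, by simp⟩ = s 0 ∧
      ∀ k : Fin (u ++ v).length, t k.succ ∈ M.step (t k.castSucc) ((u ++ v).get k) := by
  have hlen : (u ++ v).length = u.length + v.length := by simp
  refine ⟨fun i => if h : i.val ≤ u.length then r ⟨i.val, by omega⟩
      else s ⟨i.val - u.length, by have := i.isLt; omega⟩, ?_, ?_, ?_, ?_⟩
  · dsimp only
    rw [dif_pos (by simp : (0 : Fin ((u ++ v).length + 1)).val ≤ u.length)]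
    exact congrArg r (Fin.ext (by simp))
  · dsimp only
    have hlv : (Fin.last (u ++ v).length).val = u.length + v.length := by
      simp [Fin.last, hlen]
    by_cases hv : v.length = 0
    · rw [dif_pos (by omega)]
      have h2 : (⟨(Fin.last (u ++ v).length).val, by omega⟩ : Fin (u.length + 1)) =
          Fin.last u.length := Fin.ext (by simp [hlv, hv])
      rw [h2, hmid]
      congr 1
      exact Fin.ext (by simp [hv])
    · rw [dif_neg (by omega)]
      congr 1
      exact Fin.ext (by simp [hlv])
  · dsimp only
    rw [dif_pos (le_refl _)]
    have h2 : (⟨u.length, by omega⟩ : Fin (u.length + 1)) = Fin.last u.length := rfl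
    rw [h2, hmid]
  · intro k
    dsimp only
    have hk : k.val < u.length + v.length := by have := k.isLt; omega
    have hsucc : (k.succ).val = k.val + 1 := rfl
    have hcs : (k.castSucc).val = k.val := rfl
    rcases lt_trichotomy k.val u.length with h | h | h
    · rw [dif_pos (by omega : k.succ.val ≤ u.length), dif_pos (by omega : k.castSucc.val ≤ u.length)]
      have hget : (u ++ v).get k = u.get ⟨k.val, h⟩ := by
        rw [List.get_eq_getElem, List.get_eq_getElem, List.getElem_append_left h]
      rw [hget]
      exact hrs ⟨k.val, h⟩
    · have hv : 0 < v.length := by omega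
      rw [dif_neg (by omega : ¬ k.succ.val ≤ u.length),
          dif_pos (by omega : k.castSucc.val ≤ u.length)]
      have h0 : (⟨k.castSucc.val, by omega⟩ : Fin (u.length + 1)) = Fin.last u.length :=
        Fin.ext (by simp [hcs, h, Fin.last])
      rw [h0, hmid]
      have hget : (u ++ v).get k = v.get ⟨0, hv⟩ := by
        rw [List.get_eq_getElem, List.get_eq_getElem, List.getElem_append_right (by omega)]
        simp [h]
      rw [hget]
      have h1 : (⟨k.succ.val - u.length, by have := k.isLt; omega⟩ : Fin (v.length + 1)) =
          (⟨0, hv⟩ : Fin v.length).succ := Fin.ext (by simp [hsucc, h, Fin.succ])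
      rw [h1]
      have h2 : (0 : Fin (v.length + 1)) = (⟨0, hv⟩ : Fin v.length).castSucc :=
        Fin.ext (by simp)
      rw [h2]
      exact hss ⟨0, hv⟩
    · rw [dif_neg (by omega : ¬ k.succ.val ≤ u.length),
          dif_neg (by omega : ¬ k.castSucc.val ≤ u.length)]
      have hget : (u ++ v).get k = v.get ⟨k.val - u.length, by omega⟩ := by
        rw [List.get_eq_getElem, List.get_eq_getElem, List.getElem_append_right (by omega)]
      rw [hget]
      have h1 : (⟨k.succ.val - u.length, by have := k.isLt; omega⟩ : Fin (v.length + 1)) =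
          (⟨k.val - u.length, by omega⟩ : Fin v.length).succ :=
        Fin.ext (by simp [hsucc, Fin.succ]; omega)
      rw [h1]
      exact hss ⟨k.val - u.length, by omega⟩

theorem mem_prod_step {α σ : Type*} {M : FinNFA α σ} {p q : σ × σ} {x : α} :
    q ∈ (prodNFA M).step p x ↔ q.1 ∈ M.step p.1 x ∧ q.2 ∈ M.step p.2 x :=
  Finset.mem_product

/-- `F` is unambiguous iff every off-diagonal state `(m,n)`, `m ≠ n`, of the product
automaton `F × F` is useless. -/
theorem stmt2 {α σ : Type*} (M : FinNFA α σ) :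
    (∀ w : List α, Subsingleton (AcceptingPath M w)) ↔
      (∀ p : σ × σ, p.1 ≠ p.2 → ¬ Useful (prodNFA M) p) := by
  constructor
  · intro h p hne ⟨⟨u, rP, hr0, hrl, hrs⟩, ⟨v, sP, hs0, hsl, hss⟩⟩
    have hrs1 := fun k => (mem_prod_step.mp (hrs k)).1
    have hrs2 := fun k => (mem_prod_step.mp (hrs k)).2
    have hss1 := fun k => (mem_prod_step.mp (hss k)).1
    have hss2 := fun k => (mem_prod_step.mp (hss k)).2
    have hmid1 : (rP (Fin.last u.length)).1 = (sP 0).1 := by rw [hrl, hs0]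
    have hmid2 : (rP (Fin.last u.length)).2 = (sP 0).2 := by rw [hrl, hs0]
    obtain ⟨t1, ht10, ht1l, ht1m, ht1s⟩ :=
      path_append (fun i => (rP i).1) (fun i => (sP i).1) hrs1 hss1 hmid1
    obtain ⟨t2, ht20, ht2l, ht2m, ht2s⟩ :=
      path_append (fun i => (rP i).2) (fun i => (sP i).2) hrs2 hss2 hmid2
    have heq := (h (u ++ v)).elim
      (⟨t1, by rw [ht10]; exact (Finset.mem_product.mp hr0).1,
        by rw [ht1l]; exact (Finset.mem_product.mp hsl).1, ht1s⟩ : AcceptingPath M (u ++ v))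
      (⟨t2, by rw [ht20]; exact (Finset.mem_product.mp hr0).2,
        by rw [ht2l]; exact (Finset.mem_product.mp hsl).2, ht2s⟩ : AcceptingPath M (u ++ v))
    have ht : t1 = t2 := congrArg (fun a : AcceptingPath M (u ++ v) => a.val) heq
    apply hne
    have := congrFun ht ⟨u.length, by simp⟩
    rw [ht1m, ht2m] at this
    rw [hs0] at this
    exact this
  · intro h w
    constructor
    intro ⟨r, hr0, hrl, hrs⟩ ⟨s, hs0, hsl, hss⟩
    apply Subtype.ext
    funext i
    by_contra hne
    set t : Fin (w.length + 1) → σ × σ := fun j => (r j, s j) with ht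
    have hts : ∀ k : Fin w.length, t k.succ ∈ (prodNFA M).step (t k.castSucc) (w.get k) :=
      fun k => mem_prod_step.mpr ⟨hrs k, hss k⟩
    apply h (r i, s i) hne
    constructor
    · have hst := path_steps hts 0 i.val (Nat.zero_le _) (by omega)
      obtain ⟨r', hr'0, hr'l, hr's⟩ := steps_to_path hst
      refine ⟨_, r', ?_, ?_, hr's⟩
      · rw [hr'0]
        have : t ⟨0, by omega⟩ = t 0 := congrArg t (Fin.ext (by simp))
        rw [this]
        exact Finset.mem_product.mpr ⟨hr0, hs0⟩
      · rw [hr'l]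
    · have hst := path_steps hts i.val w.length (by omega) (le_refl _)
      obtain ⟨s', hs'0, hs'l, hs's⟩ := steps_to_path hst
      refine ⟨_, s', ?_, ?_, hs's⟩
      · rw [hs'0]
      · rw [hs'l]
        have : t ⟨w.length, by omega⟩ = t (Fin.last w.length) := rfl
        rw [this]
        exact Finset.mem_product.mpr ⟨hrl, hsl⟩
end

section
/- Let A^0, …, A^{d-1}, X ∈ M_D(ℂ), and for each N define the state |ψ_N⟩ = Σ_{i_1,…,i_N} Tr[X A^{i_1} ⋯ A^{i_N}] |i_1 … i_N⟩ in (ℂ^d)^{⊗N}. Then |ψ_N⟩ is invariant under the cyclic shift operator for all N if and only if Tr[X[a,b]] = 0 for all a, b in the unital subalgebra of M_D(ℂ) generated by {A^0, …, A^{d-1}}. -/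
open Matrix

/-- The MPS-X coefficient `Tr[X A^{i_1} ⋯ A^{i_N}]` of the basis element `|i_1 … i_N⟩`. -/
noncomputable def mpsCoeff {d D : ℕ} (X : Matrix (Fin D) (Fin D) ℂ)
    (A : Fin d → Matrix (Fin D) (Fin D) ℂ) {N : ℕ} (i : Fin N → Fin d) : ℂ :=
  (X * (List.ofFn fun k => A (i k)).prod).trace

section Aux

variable {d D : ℕ} (X : Matrix (Fin D) (Fin D) ℂ) (A : Fin d → Matrix (Fin D) (Fin D) ℂ)

private lemma rot_prod {N : ℕ} (i : Fin (N + 1) → Fin d) :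
    (List.ofFn fun k => A ((i ∘ finRotate (N + 1)) k)).prod
      = (List.ofFn fun k : Fin N => A (i k.succ)).prod * A (i 0) := by
  have hl : (List.ofFn fun k => A ((i ∘ finRotate (N + 1)) k)) =
      (List.ofFn fun k : Fin N => A (i k.succ)).concat (A (i 0)) := by
    rw [List.ofFn_succ']
    congr 1
    · congr 1
      funext k
      simp [Function.comp, finRotate_succ_apply, Fin.coeSucc_eq_succ]
    · simp [Function.comp, finRotate_last]
  rw [hl, List.concat_eq_append, List.prod_append, List.prod_cons, List.prod_nil, mul_one]

private lemma coeff_succ {N : ℕ} (i : Fin (N + 1) → Fin d) :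
    mpsCoeff X A i
      = (X * (A (i 0) * (List.ofFn fun k : Fin N => A (i k.succ)).prod)).trace := by
  rw [mpsCoeff, List.ofFn_succ, List.prod_cons]

private lemma coeff_rot {N : ℕ} (i : Fin (N + 1) → Fin d) :
    mpsCoeff X A (i ∘ finRotate (N + 1))
      = (X * ((List.ofFn fun k : Fin N => A (i k.succ)).prod * A (i 0))).trace := by
  rw [mpsCoeff, rot_prod]

private lemma step (h : ∀ (N : ℕ) (i : Fin N → Fin d),
      mpsCoeff X A i = mpsCoeff X A (i ∘ finRotate N))
    (j : Fin d) (l : List (Fin d)) :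
    (X * (A j * (l.map A).prod)).trace = (X * ((l.map A).prod * A j)).trace := by
  have hh := h (l.length + 1) (Fin.cons j l.get : Fin (l.length + 1) → Fin d)
  rw [coeff_succ, coeff_rot] at hh
  have hfn : (List.ofFn fun k : Fin l.length => A ((Fin.cons j l.get : Fin (l.length + 1) → Fin d) k.succ)) = l.map A := by
    simp only [Fin.cons_succ]
    rw [show (fun k : Fin l.length => A (l.get k)) = A ∘ l.get from rfl, ← List.map_ofFn,
      List.ofFn_get]
  rw [hfn] at hh
  simpa using hh

private lemma swap (h : ∀ (N : ℕ) (i : Fin N → Fin d),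
      mpsCoeff X A i = mpsCoeff X A (i ∘ finRotate N)) :
    ∀ l1 l2 : List (Fin d),
      (X * ((l1.map A).prod * (l2.map A).prod)).trace
        = (X * ((l2.map A).prod * (l1.map A).prod)).trace := by
  intro l1
  induction l1 with
  | nil => simp
  | cons j l ih =>
    intro l2
    calc (X * (((j :: l).map A).prod * (l2.map A).prod)).trace
        = (X * (A j * ((l ++ l2).map A).prod)).trace := by
          simp [List.prod_cons, List.map_append, List.prod_append, mul_assoc]
      _ = (X * (((l ++ l2).map A).prod * A j)).trace := step X A h j (l ++ l2)
      _ = (X * ((l.map A).prod * ((l2 ++ [j]).map A).prod)).trace := by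
          simp [List.map_append, List.prod_append, mul_assoc]
      _ = (X * (((l2 ++ [j]).map A).prod * (l.map A).prod)).trace := ih (l2 ++ [j])
      _ = (X * ((l2.map A).prod * ((j :: l).map A).prod)).trace := by
          simp [List.map_append, List.prod_append, List.prod_cons, mul_assoc]

private lemma key (h : ∀ (N : ℕ) (i : Fin N → Fin d),
      mpsCoeff X A i = mpsCoeff X A (i ∘ finRotate N))
    {a b : Matrix (Fin D) (Fin D) ℂ}
    (ha : a ∈ Submonoid.closure (Set.range A)) (hb : b ∈ Submonoid.closure (Set.range A)) :
    (X * (a * b)).trace = (X * (b * a)).trace := by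
  obtain ⟨l1, hl1, rfl⟩ := Submonoid.exists_list_of_mem_closure ha
  obtain ⟨l2, hl2, rfl⟩ := Submonoid.exists_list_of_mem_closure hb
  have conv : ∀ (l : List (Matrix (Fin D) (Fin D) ℂ)), (∀ y ∈ l, y ∈ Set.range A) →
      ∃ il : List (Fin d), il.map A = l := by
    intro l
    induction l with
    | nil => exact fun _ => ⟨[], rfl⟩
    | cons x l ihl =>
      intro hm
      obtain ⟨j, hj⟩ := hm x (by simp)
      obtain ⟨il, hil⟩ := ihl fun y hy => hm y (by simp [hy])
      exact ⟨j :: il, by simp [hj, hil]⟩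
  obtain ⟨il1, rfl⟩ := conv l1 hl1
  obtain ⟨il2, rfl⟩ := conv l2 hl2
  exact swap X A h il1 il2

end Aux

/-- The states `|ψ_N⟩ = Σ Tr[X A^{i_1} ⋯ A^{i_N}] |i_1 … i_N⟩` are invariant under the
cyclic shift for all `N` iff `Tr[X[a,b]] = 0` for all `a, b` in the unital subalgebra of
`M_D(ℂ)` generated by the `A^i`. -/
theorem stmt3 {d D : ℕ} (X : Matrix (Fin D) (Fin D) ℂ)
    (A : Fin d → Matrix (Fin D) (Fin D) ℂ) :
    (∀ (N : ℕ) (i : Fin N → Fin d), mpsCoeff X A i = mpsCoeff X A (i ∘ finRotate N)) ↔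
      (∀ a b : Matrix (Fin D) (Fin D) ℂ, a ∈ Algebra.adjoin ℂ (Set.range A) →
        b ∈ Algebra.adjoin ℂ (Set.range A) → (X * (a * b - b * a)).trace = 0) := by
  constructor
  · intro h a b ha hb
    have ha' : a ∈ Submodule.span ℂ ((Submonoid.closure (Set.range A) : Submonoid _) : Set _) := by
      rw [← Algebra.adjoin_eq_span]; exact ha
    have hb' : b ∈ Submodule.span ℂ ((Submonoid.closure (Set.range A) : Submonoid _) : Set _) := by
      rw [← Algebra.adjoin_eq_span]; exact hb
    have main : ∀ a ∈ Submodule.span ℂ ((Submonoid.closure (Set.range A) : Submonoid _) : Set _),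
        ∀ b ∈ Submodule.span ℂ ((Submonoid.closure (Set.range A) : Submonoid _) : Set _),
        (X * (a * b)).trace = (X * (b * a)).trace := by
      intro a ha
      induction ha using Submodule.span_induction with
      | mem x hx =>
        intro b hb
        induction hb using Submodule.span_induction with
        | mem y hy => exact key X A h hx hy
        | zero => simp
        | add y z _ _ hy hz => simp [mul_add, add_mul, hy, hz]
        | smul c y _ hy => simp [mul_smul_comm, smul_mul_assoc, hy]
      | zero => simp
      | add x y _ _ hx hy => intro b hb; simp [add_mul, mul_add, hx b hb, hy b hb]
      | smul c x _ hx => intro b hb; simp [smul_mul_assoc, mul_smul_comm, hx b hb]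
    have := main a ha' b hb'
    rw [mul_sub, trace_sub, this, sub_self]
  · intro h N i
    cases N with
    | zero => simp [mpsCoeff]
    | succ M =>
      rw [coeff_succ, coeff_rot]
      have ha : A (i 0) ∈ Algebra.adjoin ℂ (Set.range A) :=
        Algebra.subset_adjoin ⟨i 0, rfl⟩
      have hP : (List.ofFn fun k : Fin M => A (i k.succ)).prod ∈
          Algebra.adjoin ℂ (Set.range A) := by
        apply Subalgebra.list_prod_mem
        intro x hx
        rw [List.mem_ofFn] at hx
        obtain ⟨k, rfl⟩ := hx
        exact Algebra.subset_adjoin ⟨_, rfl⟩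
      have := h _ _ ha hP
      rw [mul_sub, trace_sub, sub_eq_zero] at this
      exact this
end

section
/- Let L ⊆ Σ* be a regular language accepted by an NFA with matrices {A^x}, boundary vectors v_l, v_r (binary entries as constructed from the automaton). Then L is shift-invariant (i.e., uv ∈ L implies vu ∈ L for all strings u, v) if and only if v_l [a, b] v_r = 0 for all a, b in the algebra generated by {A^x}_{x∈Σ}. -/
/-!
Write `τ(a) = v_l a v_r` and `A^w` for the product of the transition matrices along `w`.
`τ(A^w)` counts the accepting paths on `w`, so for an unambiguous automaton it is the
indicator of `w ∈ L`. Since `A^u A^v = A^(uv)`, shift invariance says exactly that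
`τ(xy) = τ(yx)` for all word matrices `x, y`. The word matrices span the algebra generated by
the `A^x`, and `(a, b) ↦ τ(ab) - τ(ba)` is bilinear, so this is equivalent to `τ` vanishing
on all commutators of that algebra.
-/

open Matrix

/-- The binary transition matrix `A^x` of the NFA, over ℂ. -/
def nfaMatC {d D : ℕ} (M : FinNFA (Fin d) (Fin D)) (x : Fin d) :
    Matrix (Fin D) (Fin D) ℂ :=
  Matrix.of fun i j => if j ∈ M.step i x then 1 else 0

/-- The indicator vector `v_l` of the initial states. -/
def vl {d D : ℕ} (M : FinNFA (Fin d) (Fin D)) : Fin D → ℂ :=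
  fun i => if i ∈ M.start then 1 else 0

/-- The indicator vector `v_r` of the accepting states. -/
def vr {d D : ℕ} (M : FinNFA (Fin d) (Fin D)) : Fin D → ℂ :=
  fun i => if i ∈ M.accept then 1 else 0

section WordMatrix

variable {α ι R : Type*} [Fintype ι] [DecidableEq ι] [CommSemiring R]

def wordMatrix (A : α → Matrix ι ι R) (w : List α) : Matrix ι ι R :=
  (w.map A).prod

variable (A : α → Matrix ι ι R)

@[simp] lemma wordMatrix_nil : wordMatrix A [] = 1 := rfl

lemma wordMatrix_cons (x : α) (w : List α) :
    wordMatrix A (x :: w) = A x * wordMatrix A w := by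
  simp [wordMatrix]

lemma wordMatrix_append (u v : List α) :
    wordMatrix A (u ++ v) = wordMatrix A u * wordMatrix A v := by
  simp [wordMatrix]

lemma wordMatrix_mem_adjoin (w : List α) :
    wordMatrix A w ∈ Algebra.adjoin R (Set.range A) := by
  induction w with
  | nil => exact one_mem _
  | cons x w ih => exact wordMatrix_cons A x w ▸ mul_mem (Algebra.subset_adjoin ⟨x, rfl⟩) ih

lemma exists_wordMatrix_eq_of_mem_closure {m : Matrix ι ι R}
    (hm : m ∈ Submonoid.closure (Set.range A)) : ∃ w, wordMatrix A w = m := by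
  induction hm using Submonoid.closure_induction with
  | mem _ hx => obtain ⟨x, rfl⟩ := hx; exact ⟨[x], by simp [wordMatrix]⟩
  | one => exact ⟨[], rfl⟩
  | mul _ _ _ _ hu hv =>
    obtain ⟨u, rfl⟩ := hu
    obtain ⟨v, rfl⟩ := hv
    exact ⟨u ++ v, wordMatrix_append A u v⟩

theorem dotProduct_wordMatrix_mulVec (w : List α) (l r : ι → R) :
    l ⬝ᵥ wordMatrix A w *ᵥ r = ∑ p : Fin (w.length + 1) → ι,
      l (p 0) * r (p (Fin.last _)) * ∏ k : Fin w.length, A (w.get k) (p k.castSucc) (p k.succ) := by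
  induction w generalizing l with
  | nil =>
    simp only [List.length_nil, Finset.univ_eq_empty, Finset.prod_empty, mul_one, wordMatrix_nil,
      one_mulVec]
    exact ((Equiv.funUnique (Fin 1) ι).sum_comp fun i => l i * r i).symm
  | cons x w ih =>
    rw [wordMatrix_cons, ← mulVec_mulVec, dotProduct_mulVec, ih]
    conv_rhs => rw [← (Fin.consEquiv fun _ => ι).sum_comp, Fintype.sum_prod_type, Finset.sum_comm]
    refine Finset.sum_congr rfl fun p _ => ?_
    simp only [vecMul, dotProduct, Finset.sum_mul, Fin.consEquiv_apply, Fin.cons_zero,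
      ← Fin.succ_last, Fin.cons_succ, Fin.prod_univ_succ, Fin.castSucc_zero,
      ← Fin.succ_castSucc, List.length_cons, List.get_eq_getElem]
    refine Finset.sum_congr rfl fun i _ => ?_
    simp only [Fin.val_zero, List.getElem_cons_zero, Fin.val_succ, List.getElem_cons_succ]
    ring

end WordMatrix

theorem LinearMap.map_mul_comm_of_mem_adjoin {R A M : Type*} [CommSemiring R] [Semiring A]
    [Algebra R A] [AddCommMonoid M] [Module R M] (f : A →ₗ[R] M) {s : Set A}
    (h : ∀ x ∈ Submonoid.closure s, ∀ y ∈ Submonoid.closure s, f (x * y) = f (y * x))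
    {a b : A} (ha : a ∈ Algebra.adjoin R s) (hb : b ∈ Algebra.adjoin R s) :
    f (a * b) = f (b * a) := by
  rw [← Subalgebra.mem_toSubmodule, Algebra.adjoin_eq_span] at ha hb
  have hspan : ∀ y ∈ Submonoid.closure s, ∀ a ∈ Submodule.span R (Submonoid.closure s : Set A),
      f (a * y) = f (y * a) := fun y hy a ha =>
    LinearMap.eqOn_span' (f := f ∘ₗ LinearMap.mulRight R y) (g := f ∘ₗ LinearMap.mulLeft R y)
      (fun x hx => h x hx y hy) ha
  exact LinearMap.eqOn_span' (f := f ∘ₗ LinearMap.mulLeft R a) (g := f ∘ₗ LinearMap.mulRight R a)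
    (fun y hy => hspan y hy a ha) hb

def Matrix.sandwich {ι R : Type*} [Fintype ι] [CommSemiring R] (l r : ι → R) :
    Matrix ι ι R →ₗ[R] R where
  toFun a := l ⬝ᵥ a *ᵥ r
  map_add' a b := by simp [add_mulVec, dotProduct_add]
  map_smul' c a := by simp [smul_mulVec, dotProduct_smul]

namespace FinNFA

variable {d D : ℕ} (M : FinNFA (Fin d) (Fin D))

theorem vl_dotProduct_wordMatrix_mulVec_vr (w : List (Fin d)) :
    vl M ⬝ᵥ wordMatrix (nfaMatC M) w *ᵥ vr M = Nat.card (AcceptingPath M w) := by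
  classical
  rw [dotProduct_wordMatrix_mulVec]
  simp only [vl, vr, nfaMatC, of_apply, Finset.prod_boole, Finset.mem_univ, true_implies,
    ite_zero_mul_ite_zero, mul_one, and_assoc]
  rw [Finset.sum_boole, AcceptingPath, Nat.card_eq_fintype_card, Fintype.card_subtype]

open Classical in
theorem vl_dotProduct_wordMatrix_mulVec_vr_of_subsingleton (w : List (Fin d))
    [Subsingleton (AcceptingPath M w)] :
    vl M ⬝ᵥ wordMatrix (nfaMatC M) w *ᵥ vr M = if Nonempty (AcceptingPath M w) then 1 else 0 := by
  rw [vl_dotProduct_wordMatrix_mulVec_vr]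
  split_ifs with h
  · rw [Nat.card_eq_one_iff_unique.mpr ⟨‹_›, h⟩, Nat.cast_one]
  · rw [not_nonempty_iff] at h
    rw [Nat.card_of_isEmpty, Nat.cast_zero]

end FinNFA

/-- Let `L` be the regular language accepted by an (unambiguous) NFA with matrices
`{A^x}` and boundary vectors `v_l, v_r`.  Then `L` is shift-invariant, i.e.
`uv ∈ L → vu ∈ L` for all strings `u, v`, iff `v_l [a,b] v_r = 0` for all `a, b` in the
algebra generated by `{A^x}`. -/
theorem stmt5 {d D : ℕ} (M : FinNFA (Fin d) (Fin D)) (L : Set (List (Fin d)))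
    (hacc : ∀ w : List (Fin d), w ∈ L ↔ Nonempty (AcceptingPath M w))
    (hufa : ∀ w : List (Fin d), Subsingleton (AcceptingPath M w)) :
    (∀ u v : List (Fin d), u ++ v ∈ L → v ++ u ∈ L) ↔
      (∀ a b : Matrix (Fin D) (Fin D) ℂ,
        a ∈ Algebra.adjoin ℂ (Set.range (nfaMatC M)) →
        b ∈ Algebra.adjoin ℂ (Set.range (nfaMatC M)) →
        vl M ⬝ᵥ (a * b - b * a).mulVec (vr M) = 0) := by
  classical
  set τ := sandwich (vl M) (vr M)
  have hτ (w : List (Fin d)) : τ (wordMatrix (nfaMatC M) w) = if w ∈ L then 1 else 0 := by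
    simp only [hacc]
    exact M.vl_dotProduct_wordMatrix_mulVec_vr_of_subsingleton w
  have hτ_append (u v : List (Fin d)) :
      τ (wordMatrix (nfaMatC M) u * wordMatrix (nfaMatC M) v) = if u ++ v ∈ L then 1 else 0 := by
    rw [← wordMatrix_append, hτ]
  simp only [sub_mulVec, dotProduct_sub, sub_eq_zero]
  constructor
  · intro hshift a b ha hb
    refine τ.map_mul_comm_of_mem_adjoin (fun x hx y hy => ?_) ha hb
    obtain ⟨u, rfl⟩ := exists_wordMatrix_eq_of_mem_closure _ hx
    obtain ⟨v, rfl⟩ := exists_wordMatrix_eq_of_mem_closure _ hy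
    rw [hτ_append, hτ_append, if_congr ⟨hshift u v, hshift v u⟩ rfl rfl]
  · intro hcomm u v huv
    have h := hcomm _ _ (wordMatrix_mem_adjoin _ u) (wordMatrix_mem_adjoin _ v)
    change τ _ = τ _ at h
    rw [hτ_append, hτ_append, if_pos huv] at h
    exact by_contra fun hvu => one_ne_zero (h.trans (if_neg hvu))
end

section
/- Every element of the unital algebra generated by matrices A^0, …, A^{d-1} ∈ M_D(ℂ) is a linear combination of products A^{w_1} A^{w_2} ⋯ A^{w_k} with k ≤ D² − 1 (together with the identity), i.e., the algebra is spanned by words in the generators of length at most D² − 1. -/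
/-!
Let `W k` be the span of the words of length at most `k` in the generators. These subspaces
increase with `k`, and since `W (k + 1) = W 0 + ∑ᵢ Aᵢ W k`, once the chain stalls (`W (k + 1) = W k`)
it is constant from then on. While it grows strictly the dimension goes up by at least one at each
step, starting from `dim W 0 = 1`, so it stalls at some `k ≤ D² − 1`. Every element of the
generated algebra is a combination of words, hence lies in `W (D² − 1)`.
-/

open Module

theorem Submodule.exists_succ_le_of_monotone {K V : Type*} [DivisionRing K] [AddCommGroup V]
    [Module K V] [FiniteDimensional K V] {p : ℕ → Submodule K V} (hp : Monotone p) :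
    ∃ k ≤ finrank K V - finrank K (p 0), p (k + 1) ≤ p k := by
  by_contra! hgrow
  have hrank : ∀ k ≤ finrank K V - finrank K (p 0) + 1, finrank K (p 0) + k ≤ finrank K (p k) := by
    intro k hk
    induction k with
    | zero => simp
    | succ k ih =>
      have hlt : p k < p (k + 1) := lt_of_le_not_ge (hp k.le_succ) (hgrow k (by omega))
      have := Submodule.finrank_lt_finrank_of_lt hlt
      omega
  have hle := Submodule.finrank_le (p (finrank K V - finrank K (p 0) + 1))
  have := hrank _ le_rfl
  omega

section WordSpan

variable (K : Type*) {A ι : Type*} [Field K] [Ring A] [Algebra K A] (f : ι → A)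

noncomputable def wordSpan (k : ℕ) : Submodule K A :=
  Submodule.span K {m | ∃ w : List ι, w.length ≤ k ∧ m = (w.map f).prod}

variable {K f}

theorem wordSpan_mono : Monotone (wordSpan K f) := by
  intro j k hjk
  apply Submodule.span_mono
  rintro m ⟨w, hw, rfl⟩
  exact ⟨w, hw.trans hjk, rfl⟩

theorem prod_map_mem_wordSpan {w : List ι} {k : ℕ} (hw : w.length ≤ k) :
    (w.map f).prod ∈ wordSpan K f k :=
  Submodule.subset_span ⟨w, hw, rfl⟩

theorem one_mem_wordSpan (k : ℕ) : (1 : A) ∈ wordSpan K f k :=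
  prod_map_mem_wordSpan (w := []) (Nat.zero_le k)

theorem mul_mem_wordSpan_succ (i : ι) {k : ℕ} {x : A} (hx : x ∈ wordSpan K f k) :
    f i * x ∈ wordSpan K f (k + 1) := by
  have h : wordSpan K f k ≤ (wordSpan K f (k + 1)).comap (LinearMap.mulLeft K (f i)) := by
    rw [wordSpan, Submodule.span_le]
    rintro m ⟨w, hw, rfl⟩
    exact prod_map_mem_wordSpan (w := i :: w) (by simpa using hw)
  exact h hx

theorem wordSpan_le_of_succ_le {k : ℕ} (h : wordSpan K f (k + 1) ≤ wordSpan K f k) (n : ℕ) :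
    wordSpan K f n ≤ wordSpan K f k := by
  induction n with
  | zero => exact wordSpan_mono (Nat.zero_le k)
  | succ n ih =>
    rw [wordSpan, Submodule.span_le]
    rintro m ⟨w, hw, rfl⟩
    cases w with
    | nil => exact one_mem_wordSpan k
    | cons i w =>
      have hw : w.length ≤ n := by simpa using hw
      simpa using h (mul_mem_wordSpan_succ i (ih (prod_map_mem_wordSpan hw)))

theorem wordSpan_le_finrank_sub_one [FiniteDimensional K A] (n : ℕ) :
    wordSpan K f n ≤ wordSpan K f (finrank K A - 1) := by
  obtain ⟨k, hk, hstall⟩ := Submodule.exists_succ_le_of_monotone (wordSpan_mono (K := K) (f := f))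
  have hk' : k ≤ finrank K A - 1 := by
    cases subsingleton_or_nontrivial A
    · rw [finrank_zero_of_subsingleton] at hk ⊢
      omega
    · have : 1 ≤ finrank K (wordSpan K f 0) := Submodule.one_le_finrank_iff.mpr <|
        (Submodule.ne_bot_iff _).mpr ⟨1, one_mem_wordSpan 0, one_ne_zero⟩
      omega
  exact (wordSpan_le_of_succ_le hstall n).trans (wordSpan_mono hk')

theorem adjoin_le_iSup_wordSpan :
    Subalgebra.toSubmodule (Algebra.adjoin K (Set.range f)) ≤ ⨆ k, wordSpan K f k := by
  rw [Algebra.adjoin_eq_span, Submodule.span_le, ← FreeMonoid.mrange_lift]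
  rintro _ ⟨w, rfl⟩
  rw [FreeMonoid.lift_apply]
  exact Submodule.mem_iSup_of_mem _ (prod_map_mem_wordSpan le_rfl)

theorem adjoin_le_wordSpan_finrank_sub_one [FiniteDimensional K A] :
    Subalgebra.toSubmodule (Algebra.adjoin K (Set.range f)) ≤ wordSpan K f (finrank K A - 1) :=
  adjoin_le_iSup_wordSpan.trans (iSup_le wordSpan_le_finrank_sub_one)

end WordSpan

/-- Pappacena's bound: every element of the unital algebra generated by
`A^0, …, A^{d-1} ∈ M_D(ℂ)` is a linear combination of products `A^{w_1} ⋯ A^{w_k}` of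
the generators along words `w` of length `k ≤ D² − 1` (the empty word giving the
identity). -/
theorem stmt6 {d D : ℕ} (A : Fin d → Matrix (Fin D) (Fin D) ℂ)
    (a : Matrix (Fin D) (Fin D) ℂ) (ha : a ∈ Algebra.adjoin ℂ (Set.range A)) :
    a ∈ Submodule.span ℂ
      {m : Matrix (Fin D) (Fin D) ℂ |
        ∃ w : List (Fin d), w.length ≤ D ^ 2 - 1 ∧ m = (w.map A).prod} := by
  have hdim : finrank ℂ (Matrix (Fin D) (Fin D) ℂ) = D ^ 2 := by
    rw [finrank_matrix, Fintype.card_fin, finrank_self, mul_one, sq]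
  have := adjoin_le_wordSpan_finrank_sub_one (K := ℂ) (f := A) ha
  rwa [hdim] at this
end

section
/- The minimal deterministic finite automaton accepting the finite language L₁ = {11, 22, 31, 32} over Σ = {1,2,3} has exactly 5 states (including no dead/sink state), while the minimal DFA accepting L₂ = {11, 12, 32, 33} has exactly 4 states. Hence two finite languages whose associated two-site states are related by a local unitary U ⊗ U can have minimal DFAs of different sizes. -/
/-- The distinct nonempty left quotients (Myhill–Nerode classes) of a language `L`;
these are the states of the minimal DFA of `L`, omitting the dead/sink state. -/
def LeftQuotients (L : Set (List (Fin 3))) : Set (Set (List (Fin 3))) :=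
  {S | S.Nonempty ∧ ∃ u : List (Fin 3), S = {v | u ++ v ∈ L}}

/-- `L₁ = {11, 22, 31, 32}` over `Σ = {1,2,3}` (symbols 1,2,3 ↦ 0,1,2). -/
def Lang1 : Set (List (Fin 3)) := {[0, 0], [1, 1], [2, 0], [2, 1]}

/-- `L₂ = {11, 12, 32, 33}`. -/
def Lang2 : Set (List (Fin 3)) := {[0, 0], [0, 1], [2, 1], [2, 2]}

lemma lq1 : LeftQuotients Lang1 =
    {Lang1, {[0]}, {[1]}, {[0],[1]}, {([] : List (Fin 3))}} := by
  ext S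
  constructor
  · rintro ⟨⟨v0, hv0⟩, u, rfl⟩
    rcases u with _ | ⟨a, _ | ⟨b, t⟩⟩
    · left; rfl
    · fin_cases a
      · right; left; ext v; simp [Lang1]
      · right; right; left; ext v; simp [Lang1]
      · right; right; right; left; ext v; simp [Lang1]
    · right; right; right; right
      simp only [Set.mem_setOf_eq, Lang1, Set.mem_insert_iff, Set.mem_singleton_iff,
        List.cons_append, List.cons.injEq] at hv0
      rcases hv0 with ⟨rfl, rfl, h⟩ | ⟨rfl, rfl, h⟩ | ⟨rfl, rfl, h⟩ | ⟨rfl, rfl, h⟩ <;>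
        · obtain ⟨rfl, rfl⟩ := List.append_eq_nil_iff.mp h
          ext v; simp [Lang1]
  · rintro (rfl | rfl | rfl | rfl | rfl)
    · exact ⟨⟨[0,0], by simp [Lang1]⟩, [], rfl⟩
    · exact ⟨⟨[0], rfl⟩, [0], by ext v; simp [Lang1]⟩
    · exact ⟨⟨[1], rfl⟩, [1], by ext v; simp [Lang1]⟩
    · exact ⟨⟨[0], by simp⟩, [2], by ext v; simp [Lang1]⟩
    · exact ⟨⟨[], rfl⟩, [0,0], by ext v; simp [Lang1]⟩

lemma lq2 : LeftQuotients Lang2 =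
    {Lang2, {[0],[1]}, {[1],[2]}, {([] : List (Fin 3))}} := by
  ext S
  constructor
  · rintro ⟨⟨v0, hv0⟩, u, rfl⟩
    rcases u with _ | ⟨a, _ | ⟨b, t⟩⟩
    · left; rfl
    · fin_cases a
      · right; left; ext v; simp [Lang2]
      · exfalso; simp [Lang2] at hv0
      · right; right; left; ext v; simp [Lang2]
    · right; right; right
      simp only [Set.mem_setOf_eq, Lang2, Set.mem_insert_iff, Set.mem_singleton_iff,
        List.cons_append, List.cons.injEq] at hv0
      rcases hv0 with ⟨rfl, rfl, h⟩ | ⟨rfl, rfl, h⟩ | ⟨rfl, rfl, h⟩ | ⟨rfl, rfl, h⟩ <;>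
        · obtain ⟨rfl, rfl⟩ := List.append_eq_nil_iff.mp h
          ext v; simp [Lang2]
  · rintro (rfl | rfl | rfl | rfl)
    · exact ⟨⟨[0,0], by simp [Lang2]⟩, [], rfl⟩
    · exact ⟨⟨[0], by simp⟩, [0], by ext v; simp [Lang2]⟩
    · exact ⟨⟨[1], by simp⟩, [2], by ext v; simp [Lang2]⟩
    · exact ⟨⟨[], rfl⟩, [0,0], by ext v; simp [Lang2]⟩

lemma ne_of_wit {α : Type*} {s t : Set α} (a : α) (h1 : a ∈ s) (h2 : a ∉ t) : s ≠ t :=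
  fun h => h2 (h ▸ h1)

/-- The minimal DFA of `L₁ = {11,22,31,32}` has exactly 5 states (not counting the
sink), while the minimal DFA of `L₂ = {11,12,32,33}` has exactly 4; hence two finite
languages whose two-site states are related by a local unitary `U ⊗ U` can have minimal
DFAs of different sizes. -/
theorem stmt11 :
    (LeftQuotients Lang1).ncard = 5 ∧ (LeftQuotients Lang2).ncard = 4 := by
  constructor
  · rw [lq1]
    rw [Set.ncard_insert_of_notMem (by
      simp only [Set.mem_insert_iff, Set.mem_singleton_iff, not_or]
      refine ⟨?_, ?_, ?_, ?_⟩ <;> exact ne_of_wit [0,0] (by simp [Lang1]) (by simp))]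
    rw [Set.ncard_insert_of_notMem (by
      simp only [Set.mem_insert_iff, Set.mem_singleton_iff, not_or]
      refine ⟨?_, ?_, ?_⟩
      · exact ne_of_wit [0] (by simp) (by simp)
      · exact (ne_of_wit [1] (by simp) (by simp)).symm
      · exact ne_of_wit [0] (by simp) (by simp))]
    rw [Set.ncard_insert_of_notMem (by
      simp only [Set.mem_insert_iff, Set.mem_singleton_iff, not_or]
      refine ⟨?_, ?_⟩
      · exact (ne_of_wit [0] (by simp) (by simp)).symm
      · exact ne_of_wit [1] (by simp) (by simp))]
    rw [Set.ncard_insert_of_notMem (by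
      simp only [Set.mem_singleton_iff]
      exact ne_of_wit [0] (by simp) (by simp))]
    rw [Set.ncard_singleton]
  · rw [lq2]
    rw [Set.ncard_insert_of_notMem (by
      simp only [Set.mem_insert_iff, Set.mem_singleton_iff, not_or]
      refine ⟨?_, ?_, ?_⟩ <;> exact ne_of_wit [0,0] (by simp [Lang2]) (by simp))]
    rw [Set.ncard_insert_of_notMem (by
      simp only [Set.mem_insert_iff, Set.mem_singleton_iff, not_or]
      refine ⟨?_, ?_⟩
      · exact ne_of_wit [0] (by simp) (by simp)
      · exact ne_of_wit [0] (by simp) (by simp))]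
    rw [Set.ncard_insert_of_notMem (by
      simp only [Set.mem_singleton_iff]
      exact ne_of_wit [1] (by simp) (by simp))]
    rw [Set.ncard_singleton]
end

section
/- Let L be a regular language over Σ = Σ∞ ∪ Σ_f, and suppose L admits two decompositions L = ⋃_m ⋃_j S^{(m)}(L_{1,j}^m, X_{1,j}^m) = ⋃_m ⋃_j S^{(m)}(L_{2,j}^m, X_{2,j}^m), where for each i ∈ {1,2} and each m: the languages L_{i,j}^m ⊆ (Σ∞ ∪ {f})* each contain exactly m occurrences of f in every word, are pairwise disjoint in j, and the finite sets X_{i,j}^m ⊆ (Σ_f)^m are pairwise distinct in j. Then the two decompositions coincide up to relabelling: for each m there is a bijection of indices under which L_{1,j}^m = L_{2,j}^m and X_{1,j}^m = X_{2,j}^m. -/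
/-- Replace the occurrences of the placeholder `none` (the symbol `f`) in a word over
`Σ∞ ∪ {f}` (encoded as `List (Option α)`) by the successive symbols of a word over
`Σ_f` (encoded as `List β`), in order from left to right. -/
def substWord {α β : Type*} : List (Option α) → List β → List (α ⊕ β)
  | [], _ => []
  | some a :: w, x => Sum.inl a :: substWord w x
  | none :: w, b :: x => Sum.inr b :: substWord w x
  | none :: _, [] => []

def toU {α β : Type*} (w : List (α ⊕ β)) : List (Option α) :=
  w.map (Sum.elim some (fun _ => none))

def toX {α β : Type*} (w : List (α ⊕ β)) : List β :=
  w.filterMap (Sum.elim (fun _ => none) (fun b => some b))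

lemma recover {α β : Type*} [DecidableEq α] :
    ∀ (u : List (Option α)) (x : List β), x.length = u.count none →
      toU (substWord u x) = u ∧ toX (substWord u x) = x := by
  intro u
  induction u with
  | nil =>
    intro x hx
    simp at hx
    subst hx
    simp [substWord, toU, toX]
  | cons o w ih =>
    intro x hx
    cases o with
    | some a =>
      have hc : ((some a :: w).count (none : Option α)) = w.count none := by
        simp [List.count_cons]
      rw [hc] at hx
      obtain ⟨h1, h2⟩ := ih x hx
      simp [substWord, toU, toX] at *
      exact ⟨h1, h2⟩
    | none =>
      have hc : ((none :: w).count (none : Option α)) = w.count none + 1 := by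
        simp [List.count_cons]
      rw [hc] at hx
      cases x with
      | nil => simp at hx
      | cons b x' =>
        simp at hx
        obtain ⟨h1, h2⟩ := ih x' hx
        simp [substWord, toU, toX] at *
        exact ⟨h1, h2⟩

/-- The substitution `S^{(m)}(L₁, L₂)`: replace in each word of `L₁` the `m` occurrences
of `f` by the `m` symbols of a word of `L₂`, taking the union over all words of `L₂`. -/
def Subst {α β : Type*} (_m : ℕ) (L1 : Set (List (Option α))) (L2 : Set (List β)) :
    Set (List (α ⊕ β)) :=
  {w | ∃ u ∈ L1, ∃ x ∈ L2, w = substWord u x}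

/-- Uniqueness of the canonical decomposition: two decompositions of the same language
`L = ⋃_m ⋃_j S^{(m)}(L_j^m, X_j^m)` satisfying the canonical properties (every word of
`L_j^m` has exactly `m` occurrences of `f`; the `X_j^m ⊆ (Σ_f)^m`; the `L_j^m` pairwise
disjoint in `j`; the `X_j^m` pairwise distinct in `j`; components nonempty) coincide up
to a relabelling of the indices. -/
theorem stmt12 {α β : Type*} [DecidableEq α]
    (J1 J2 : ℕ → Type*)
    (L1 : (m : ℕ) → J1 m → Set (List (Option α)))
    (X1 : (m : ℕ) → J1 m → Set (List β))
    (L2 : (m : ℕ) → J2 m → Set (List (Option α)))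
    (X2 : (m : ℕ) → J2 m → Set (List β))
    (hcount1 : ∀ m j w, w ∈ L1 m j → w.count none = m)
    (hcount2 : ∀ m j w, w ∈ L2 m j → w.count none = m)
    (hlen1 : ∀ m j x, x ∈ X1 m j → x.length = m)
    (hlen2 : ∀ m j x, x ∈ X2 m j → x.length = m)
    (hne1 : ∀ m j, (L1 m j).Nonempty ∧ (X1 m j).Nonempty)
    (hne2 : ∀ m j, (L2 m j).Nonempty ∧ (X2 m j).Nonempty)
    (hdisj1 : ∀ m (j k : J1 m), j ≠ k → Disjoint (L1 m j) (L1 m k))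
    (hdisj2 : ∀ m (j k : J2 m), j ≠ k → Disjoint (L2 m j) (L2 m k))
    (hX1 : ∀ m (j k : J1 m), j ≠ k → X1 m j ≠ X1 m k)
    (hX2 : ∀ m (j k : J2 m), j ≠ k → X2 m j ≠ X2 m k)
    (hunion : (⋃ m, ⋃ j, Subst m (L1 m j) (X1 m j)) =
        ⋃ m, ⋃ j, Subst m (L2 m j) (X2 m j)) :
    ∀ m, ∃ e : J1 m ≃ J2 m, ∀ j, L1 m j = L2 m (e j) ∧ X1 m j = X2 m (e j) := by
  -- key transfer lemmas
  have key12 : ∀ m (j : J1 m) u x, u ∈ L1 m j → x ∈ X1 m j →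
      ∃ j2 : J2 m, u ∈ L2 m j2 ∧ x ∈ X2 m j2 := by
    intro m j u x hu hx
    have hmem : substWord u x ∈ ⋃ m, ⋃ j, Subst m (L1 m j) (X1 m j) := by
      refine Set.mem_iUnion.2 ⟨m, Set.mem_iUnion.2 ⟨j, ?_⟩⟩
      exact ⟨u, hu, x, hx, rfl⟩
    rw [hunion] at hmem
    obtain ⟨S, ⟨m', rfl⟩, hS⟩ := hmem
    obtain ⟨T, ⟨j2, rfl⟩, hT⟩ := hS
    obtain ⟨u', hu', x', hx', hw⟩ := hT
    have h1 := recover u x ((hlen1 m j x hx).trans (hcount1 m j u hu).symm)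
    have h2 := recover u' x' ((hlen2 m' j2 x' hx').trans (hcount2 m' j2 u' hu').symm)
    rw [← hw] at h2
    have hu'' : u' = u := h2.1.symm.trans h1.1
    have hx'' : x' = x := h2.2.symm.trans h1.2
    subst hu''; subst hx''
    have hm : m' = m := (hcount2 m' j2 u' hu').symm.trans (hcount1 m j u' hu)
    subst hm
    exact ⟨j2, hu', hx'⟩
  have key21 : ∀ m (j : J2 m) u x, u ∈ L2 m j → x ∈ X2 m j →
      ∃ j1 : J1 m, u ∈ L1 m j1 ∧ x ∈ X1 m j1 := by
    intro m j u x hu hx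
    have hmem : substWord u x ∈ ⋃ m, ⋃ j, Subst m (L2 m j) (X2 m j) := by
      refine Set.mem_iUnion.2 ⟨m, Set.mem_iUnion.2 ⟨j, ?_⟩⟩
      exact ⟨u, hu, x, hx, rfl⟩
    rw [← hunion] at hmem
    obtain ⟨S, ⟨m', rfl⟩, hS⟩ := hmem
    obtain ⟨T, ⟨j1, rfl⟩, hT⟩ := hS
    obtain ⟨u', hu', x', hx', hw⟩ := hT
    have h1 := recover u x ((hlen2 m j x hx).trans (hcount2 m j u hu).symm)
    have h2 := recover u' x' ((hlen1 m' j1 x' hx').trans (hcount1 m' j1 u' hu').symm)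
    rw [← hw] at h2
    have hu'' : u' = u := h2.1.symm.trans h1.1
    have hx'' : x' = x := h2.2.symm.trans h1.2
    subst hu''; subst hx''
    have hm : m' = m := (hcount1 m' j1 u' hu').symm.trans (hcount2 m j u' hu)
    subst hm
    exact ⟨j1, hu', hx'⟩
  have hXstep : ∀ m (j1 : J1 m) (j2 : J2 m), (L1 m j1 ∩ L2 m j2).Nonempty →
      X1 m j1 = X2 m j2 := by
    intro m j1 j2 ⟨u0, hu01, hu02⟩
    ext x
    constructor
    · intro hx
      obtain ⟨j2', hu', hx'⟩ := key12 m j1 u0 x hu01 hx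
      rcases eq_or_ne j2' j2 with rfl | hne
      · exact hx'
      · exact absurd hu02 (Set.disjoint_left.1 (hdisj2 m j2' j2 hne) hu')
    · intro hx
      obtain ⟨j1', hu', hx'⟩ := key21 m j2 u0 x hu02 hx
      rcases eq_or_ne j1' j1 with rfl | hne
      · exact hx'
      · exact absurd hu01 (Set.disjoint_left.1 (hdisj1 m j1' j1 hne) hu')
  have hLstep : ∀ m (j1 : J1 m) (j2 : J2 m), (L1 m j1 ∩ L2 m j2).Nonempty →
      L1 m j1 = L2 m j2 := by
    intro m j1 j2 hW
    have hX : X1 m j1 = X2 m j2 := hXstep m j1 j2 hW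
    ext u
    constructor
    · intro hu
      obtain ⟨x0, hx0⟩ := (hne1 m j1).2
      obtain ⟨j2', hu', hx'⟩ := key12 m j1 u x0 hu hx0
      have hX' : X1 m j1 = X2 m j2' := hXstep m j1 j2' ⟨u, hu, hu'⟩
      rcases eq_or_ne j2' j2 with rfl | hne
      · exact hu'
      · exact absurd (hX'.symm.trans hX) (hX2 m j2' j2 hne)
    · intro hu
      obtain ⟨x0, hx0⟩ := (hne2 m j2).2
      obtain ⟨j1', hu', hx'⟩ := key21 m j2 u x0 hu hx0
      have hX' : X1 m j1' = X2 m j2 := hXstep m j1' j2 ⟨u, hu', hu⟩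
      rcases eq_or_ne j1' j1 with rfl | hne
      · exact hu'
      · exact absurd (hX'.trans hX.symm) (hX1 m j1' j1 hne)
  intro m
  have hex : ∀ j1 : J1 m, ∃ j2 : J2 m, (L1 m j1 ∩ L2 m j2).Nonempty := by
    intro j1
    obtain ⟨u, hu⟩ := (hne1 m j1).1
    obtain ⟨x, hx⟩ := (hne1 m j1).2
    obtain ⟨j2, hu', _⟩ := key12 m j1 u x hu hx
    exact ⟨j2, u, hu, hu'⟩
  choose f hf using hex
  have hfL : ∀ j1, L1 m j1 = L2 m (f j1) := fun j1 => hLstep m j1 (f j1) (hf j1)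
  have hbij : Function.Bijective f := by
    constructor
    · intro a b hab
      by_contra hne
      have : L1 m a = L1 m b := by rw [hfL a, hfL b, hab]
      obtain ⟨u, hu⟩ := (hne1 m a).1
      exact Set.disjoint_left.1 (hdisj1 m a b hne) hu (this ▸ hu)
    · intro j2
      obtain ⟨u, hu⟩ := (hne2 m j2).1
      obtain ⟨x, hx⟩ := (hne2 m j2).2
      obtain ⟨j1, hu', _⟩ := key21 m j2 u x hu hx
      refine ⟨j1, ?_⟩
      have h1 : L1 m j1 = L2 m j2 := hLstep m j1 j2 ⟨u, hu', hu⟩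
      by_contra hne
      have : L2 m (f j1) = L2 m j2 := (hfL j1).symm.trans h1
      exact Set.disjoint_left.1 (hdisj2 m (f j1) j2 hne) (this ▸ hu) hu
  exact ⟨Equiv.ofBijective f hbij, fun j =>
    ⟨hfL j, hXstep m j (f j) (hf j)⟩⟩
end

section
/- A regular language L over alphabet Σ has polynomially many words of each length (i.e., |L ∩ Σ^N| = O(N^k) for some k) if it can be written in the form L = ⋃_{i=1}^Q z_{i,0}(y_{i,1})* z_{i,1} ⋯ (y_{i,t_i})* z_{i,t_i} for finitely many strings y_{i,j}, z_{i,j} ∈ Σ* with all t_i ≤ k+1. More precisely, for any single 'bounded' expression z_0 (y_1)* z_1 ⋯ (y_t)* z_t, the number of words of length N it contains is at most O(N^{t-1}). -/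
/-- The 'bounded' language `z_0 (y_1)* z_1 ⋯ (y_t)* z_t`. -/
def BoundedExpr {α : Type*} {t : ℕ} (z : Fin (t + 1) → List α) (y : Fin t → List α) :
    Set (List α) :=
  {w | ∃ k : Fin t → ℕ,
    w = z 0 ++
      (List.ofFn fun i : Fin t => (List.replicate (k i) (y i)).flatten ++ z i.succ).flatten}

namespace Stmt13Aux

def wd {α : Type*} {t : ℕ} (z : Fin (t + 1) → List α) (y : Fin t → List α)
    (k : Fin t → ℕ) : List α :=
  z 0 ++ (List.ofFn fun i : Fin t => (List.replicate (k i) (y i)).flatten ++ z i.succ).flatten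

lemma length_wd {α : Type*} {t : ℕ} (z : Fin (t + 1) → List α) (y : Fin t → List α)
    (k : Fin t → ℕ) :
    (wd z y k).length = (z 0).length + ∑ i, (k i * (y i).length + (z i.succ).length) := by
  simp [wd, List.length_flatten, List.map_ofFn, List.sum_ofFn, Function.comp,
    List.map_replicate]

lemma wd_congr {α : Type*} {t : ℕ} (z : Fin (t + 1) → List α) (y : Fin t → List α)
    {k k' : Fin t → ℕ} (h : ∀ i, k i = k' i ∨ y i = []) : wd z y k = wd z y k' := by
  unfold wd
  have : (fun i : Fin t => (List.replicate (k i) (y i)).flatten ++ z i.succ)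
      = fun i : Fin t => (List.replicate (k' i) (y i)).flatten ++ z i.succ := by
    funext i
    rcases h i with h1 | h1
    · rw [h1]
    · simp [h1]
  rw [this]

lemma key {α : Type*} {t : ℕ} (z : Fin (t + 1) → List α) (y : Fin t → List α) (N : ℕ) :
    {w ∈ BoundedExpr z y | w.length = N}.Finite ∧
    {w ∈ BoundedExpr z y | w.length = N}.ncard ≤ (N + 1) ^ (t - 1) := by
  cases t with
  | zero =>
    have hsub : {w ∈ BoundedExpr z y | w.length = N} ⊆ {z 0 ++ []} := by
      rintro w ⟨⟨k, hk⟩, -⟩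
      simp only [Set.mem_singleton_iff, hk, List.ofFn_zero, List.flatten_nil]
    refine ⟨Set.Finite.subset (Set.finite_singleton _) hsub, ?_⟩
    calc {w ∈ BoundedExpr z y | w.length = N}.ncard ≤ ({z 0 ++ []} : Set (List α)).ncard :=
          Set.ncard_le_ncard hsub (Set.finite_singleton _)
      _ = 1 := Set.ncard_singleton _
      _ ≤ (N + 1) ^ (0 - 1) := by simp
  | succ s =>
    set g : (Fin s → Fin (N + 1)) → List α := fun v =>
      wd z y (Fin.snoc (fun i => (v i : ℕ))
        (if (y (Fin.last s)).length = 0 then 0 else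
          (N - (z 0).length -
              (∑ i : Fin s, ((v i : ℕ) * (y i.castSucc).length + (z i.castSucc.succ).length)) -
              (z (Fin.last s).succ).length) / (y (Fin.last s)).length)) with hg
    have hsub : {w ∈ BoundedExpr z y | w.length = N} ⊆ Set.range g := by
      rintro w ⟨⟨k, hk⟩, hlen⟩
      have hw : w = wd z y k := hk
      have hN : N = (z 0).length + ∑ i, (k i * (y i).length + (z i.succ).length) := by
        rw [← length_wd, ← hw, hlen]
      -- each term is at most N
      have hterm : ∀ i : Fin (s + 1),
          k i * (y i).length + (z i.succ).length ≤ N := by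
        intro i
        have h2 : k i * (y i).length + (z i.succ).length
            ≤ ∑ j, (k j * (y j).length + (z j.succ).length) :=
          Finset.single_le_sum (f := fun j => k j * (y j).length + (z j.succ).length)
            (fun j _ => Nat.zero_le _) (Finset.mem_univ i)
        omega
      have hkle : ∀ i : Fin (s + 1), (y i).length ≠ 0 → k i ≤ N := by
        intro i hy
        have h1 := hterm i
        have h2 : k i ≤ k i * (y i).length := Nat.le_mul_of_pos_right _ (by omega)
        omega
      set v : Fin s → Fin (N + 1) := fun i =>
        ⟨if h : (y i.castSucc).length = 0 then 0 else k i.castSucc, by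
          split
          · omega
          · have := hkle i.castSucc (by assumption); omega⟩ with hv
      refine ⟨v, ?_⟩
      have hsum : (∑ i : Fin s, ((v i : ℕ) * (y i.castSucc).length + (z i.castSucc.succ).length))
          = ∑ i : Fin s, (k i.castSucc * (y i.castSucc).length + (z i.castSucc.succ).length) := by
        refine Finset.sum_congr rfl fun i _ => ?_
        simp only [hv]
        split
        · rename_i h0; rw [h0]; simp
        · rfl
      rw [hg, hw]
      refine wd_congr z y fun i => ?_
      refine Fin.lastCases ?_ ?_ i
      · rw [Fin.snoc_last]
        by_cases hy : (y (Fin.last s)).length = 0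
        · exact Or.inr (List.length_eq_zero_iff.mp hy)
        · left
          rw [if_neg hy, hsum]
          have hNsplit : N = (z 0).length +
              (∑ i : Fin s, (k i.castSucc * (y i.castSucc).length + (z i.castSucc.succ).length)) +
              (k (Fin.last s) * (y (Fin.last s)).length + (z (Fin.last s).succ).length) := by
            rw [hN, Fin.sum_univ_castSucc]; ring
          have : N - (z 0).length -
              (∑ i : Fin s, (k i.castSucc * (y i.castSucc).length + (z i.castSucc.succ).length)) -
              (z (Fin.last s).succ).length = k (Fin.last s) * (y (Fin.last s)).length := by
            omega
          rw [this, Nat.mul_div_cancel _ (by omega)]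
      · intro j
        rw [Fin.snoc_castSucc]
        simp only [hv]
        split
        · exact Or.inr (List.length_eq_zero_iff.mp (by assumption))
        · exact Or.inl rfl
    refine ⟨Set.Finite.subset (Set.finite_range g) hsub, ?_⟩
    calc {w ∈ BoundedExpr z y | w.length = N}.ncard ≤ (Set.range g).ncard :=
          Set.ncard_le_ncard hsub (Set.finite_range g)
      _ = (g '' Set.univ).ncard := by rw [Set.image_univ]
      _ ≤ (Set.univ : Set (Fin s → Fin (N + 1))).ncard := Set.ncard_image_le Set.finite_univ
      _ = (N + 1) ^ s := by
          rw [Set.ncard_univ]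
          simp [Nat.card_eq_fintype_card]
      _ = (N + 1) ^ (s + 1 - 1) := by simp

lemma ncard_iUnion_le {X : Type*} {n : ℕ} (S : Fin n → Set X) (h : ∀ i, (S i).Finite) :
    (⋃ i, S i).ncard ≤ ∑ i, (S i).ncard := by
  induction n with
  | zero => simp
  | succ n ih =>
    have hU : (⋃ i, S i) = S 0 ∪ ⋃ i : Fin n, S i.succ := by
      ext x; simp [Fin.exists_fin_succ]
    rw [hU, Fin.sum_univ_succ]
    calc (S 0 ∪ ⋃ i : Fin n, S i.succ).ncard
        ≤ (S 0).ncard + (⋃ i : Fin n, S i.succ).ncard := Set.ncard_union_le _ _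
      _ ≤ (S 0).ncard + ∑ i : Fin n, (S i.succ).ncard := by
          exact Nat.add_le_add_left (ih _ (fun i => h i.succ)) _

end Stmt13Aux

/-- A single bounded expression `z_0 (y_1)* z_1 ⋯ (y_t)* z_t` contains `O(N^{t−1})` words
of length `N`; consequently a finite union of such expressions with all `t_i ≤ k+1` is a
sparse language with `O(N^k)` words of length `N`. -/
theorem stmt13 {α : Type*} (k Q : ℕ) (t : Fin Q → ℕ) (ht : ∀ i, t i ≤ k + 1)
    (z : (i : Fin Q) → Fin (t i + 1) → List α) (y : (i : Fin Q) → Fin (t i) → List α) :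
    (∀ i, ∃ C : ℕ, ∀ N : ℕ,
        {w ∈ BoundedExpr (z i) (y i) | w.length = N}.ncard ≤ C * (N + 1) ^ (t i - 1)) ∧
    (∃ C : ℕ, ∀ N : ℕ,
        {w ∈ ⋃ i, BoundedExpr (z i) (y i) | w.length = N}.ncard ≤ C * (N + 1) ^ k) := by
  constructor
  · intro i
    exact ⟨1, fun N => by simpa using (Stmt13Aux.key (z i) (y i) N).2⟩
  · refine ⟨Q, fun N => ?_⟩
    have hset : {w ∈ ⋃ i, BoundedExpr (z i) (y i) | w.length = N}
        = ⋃ i, {w ∈ BoundedExpr (z i) (y i) | w.length = N} := by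
      ext w; simp only [Set.mem_setOf_eq, Set.mem_iUnion]; tauto
    rw [hset]
    calc (⋃ i, {w ∈ BoundedExpr (z i) (y i) | w.length = N}).ncard
        ≤ ∑ i, {w ∈ BoundedExpr (z i) (y i) | w.length = N}.ncard :=
          Stmt13Aux.ncard_iUnion_le _ (fun i => (Stmt13Aux.key (z i) (y i) N).1)
      _ ≤ ∑ _i : Fin Q, (N + 1) ^ k := by
          refine Finset.sum_le_sum fun i _ => ?_
          calc {w ∈ BoundedExpr (z i) (y i) | w.length = N}.ncard
              ≤ (N + 1) ^ (t i - 1) := (Stmt13Aux.key (z i) (y i) N).2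
            _ ≤ (N + 1) ^ k := Nat.pow_le_pow_right (by omega) (by have := ht i; omega)
      _ = Q * (N + 1) ^ k := by simp [Finset.sum_const, Finset.card_univ]
end

section
/- Let Σ∞ ⊆ Σ, let L₁, L₂ be sparse regular languages over Σ, and suppose that for all N the states |L_i^N⟩ = Σ_{w∈L_i∩Σ^N}|w⟩ satisfy |L₂^N⟩ = U^{⊗N}|L₁^N⟩ for a fixed unitary U on ℂ^{|Σ|}. Suppose further that for some x ∈ Σ∞ there exist fixed strings s₁, s₂ (with a = |s₁|+|s₂|) such that s₁ x^{N−a} s₂ ∈ L₂ for all large N. If |⟨x|U|y⟩| ≤ λ < 1 for all y ∈ Σ, then a contradiction follows; hence there exists y ∈ Σ with |⟨x|U|y⟩| = 1, i.e., U maps some basis vector to x up to phase. -/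
open Matrix

/-- `L` is regular: it is the language accepted by some finite automaton. -/
def RegularLang {d : ℕ} (L : Set (List (Fin d))) : Prop :=
  ∃ (D : ℕ) (M : FinNFA (Fin d) (Fin D)),
    ∀ w : List (Fin d), w ∈ L ↔ Nonempty (AcceptingPath M w)

/-- `L` is sparse: the number of its words of length `N` is `O(poly(N))`. -/
def IsSparse {d : ℕ} (L : Set (List (Fin d))) : Prop :=
  ∃ C k : ℕ, ∀ N : ℕ, {w ∈ L | w.length = N}.ncard ≤ C * (N + 1) ^ k

open Filter Topology

/-!
If every entry of the row of `U` indexed by `x` had modulus at most `λ < 1`, then for the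
word `w = s₁ x^M s₂ ∈ L₂` of length `N = M + a` the coefficient `⟨w|U^{⊗N}|L₁^N⟩ = 1` would be
a sum of at most `|L₁ ∩ Σ^N| = O(N^k)` products, each containing `M` factors `U x y` and hence
of modulus at most `λ^M`. Since `N^k λ^(N - a) → 0`, this is impossible for large `N`.
-/

theorem tendsto_natCast_add_pow_mul_pow_atTop_nhds_zero {r : ℝ} (hr₀ : 0 ≤ r) (hr₁ : r < 1)
    {c : ℝ} (hc : 0 ≤ c) (k : ℕ) :
    Tendsto (fun n : ℕ => ((n : ℝ) + c) ^ k * r ^ n) atTop (𝓝 0) := by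
  have hlim : Tendsto (fun n : ℕ => (c + 1) ^ k * ((n : ℝ) ^ k * r ^ n)) atTop (𝓝 0) := by
    simpa using (tendsto_pow_const_mul_const_pow_of_abs_lt_one k
      (by rwa [abs_of_nonneg hr₀])).const_mul ((c + 1) ^ k)
  refine squeeze_zero' (Eventually.of_forall fun n => by positivity) ?_ hlim
  filter_upwards [eventually_ge_atTop 1] with n hn
  have hn' : (1 : ℝ) ≤ n := by exact_mod_cast hn
  have hbase : (n : ℝ) + c ≤ (c + 1) * n := by nlinarith
  calc ((n : ℝ) + c) ^ k * r ^ n ≤ ((c + 1) * n) ^ k * r ^ n := by gcongr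
    _ = (c + 1) ^ k * ((n : ℝ) ^ k * r ^ n) := by rw [mul_pow]; ring

section WordProducts

variable {ι : Type*} {U : Matrix ι ι ℂ} {x : ι} {lam : ℝ}

theorem norm_prod_entries_le_pow_count [DecidableEq ι] (hU : ∀ i j, ‖U i j‖ ≤ 1)
    (hlam : ∀ y, ‖U x y‖ ≤ lam) (w : List ι) (f : ℕ → ι) :
    ‖∏ k : Fin w.length, U (w.get k) (f k)‖ ≤ lam ^ w.count x := by
  induction w generalizing f with
  | nil => simp
  | cons a w ih =>
    have hlam₀ : 0 ≤ lam := (norm_nonneg _).trans (hlam x)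
    rw [show ∏ k : Fin (a :: w).length, U ((a :: w).get k) (f k) =
        U a (f 0) * ∏ k : Fin w.length, U (w.get k) (f (k + 1)) from Fin.prod_univ_succ _,
      norm_mul, List.count_cons, pow_add]
    simp only [beq_iff_eq]
    have hhead : ‖U a (f 0)‖ ≤ lam ^ if a = x then 1 else 0 := by
      split_ifs with h
      · simpa [h] using hlam (f 0)
      · simpa using hU a (f 0)
    simpa [mul_comm] using
      mul_le_mul hhead (ih (fun k => f (k + 1))) (norm_nonneg _) (by positivity)

/-- `hsum` says that `⟨w| U^{⊗|w|} |S⟩ = 1`, where `|S⟩` is the sum of the words of `S`. -/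
theorem one_le_ncard_mul_pow_count [DecidableEq ι] (hU : ∀ i j, ‖U i j‖ ≤ 1)
    (hlam : ∀ y, ‖U x y‖ ≤ lam) {w : List ι} (z : ι) {S : Set (List ι)}
    (hS : S.Finite)
    (hsum : ∑ᶠ v ∈ S, ∏ k : Fin w.length, U (w.get k) (v.getD k z) = 1) :
    1 ≤ (S.ncard : ℝ) * lam ^ w.count x := by
  rw [finsum_mem_eq_finite_toFinset_sum _ hS] at hsum
  calc (1 : ℝ) = ‖∑ v ∈ hS.toFinset, ∏ k : Fin w.length, U (w.get k) (v.getD k z)‖ := by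
        rw [hsum, norm_one]
    _ ≤ ∑ v ∈ hS.toFinset, ‖∏ k : Fin w.length, U (w.get k) (v.getD k z)‖ := norm_sum_le _ _
    _ ≤ hS.toFinset.card • lam ^ w.count x :=
        Finset.sum_le_card_nsmul _ _ _ fun v _ =>
          norm_prod_entries_le_pow_count hU hlam w (v.getD · z)
    _ = (S.ncard : ℝ) * lam ^ w.count x := by
        rw [nsmul_eq_mul, Set.ncard_eq_toFinset_card S hS]

end WordProducts

theorem stmt14_general {d : ℕ} (L1 L2 : Set (List (Fin d))) (U : Matrix (Fin d) (Fin d) ℂ)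
    (x : Fin d)
    (hsp1 : IsSparse L1)
    (hU : U ∈ Matrix.unitaryGroup (Fin d) ℂ)
    (hrel : ∀ w : List (Fin d),
      L2.indicator (fun _ => (1 : ℂ)) w =
        ∑ᶠ v ∈ {v : List (Fin d) | v ∈ L1 ∧ v.length = w.length},
          ∏ k : Fin w.length, U (w.get k) (v.getD (k : ℕ) x))
    (s1 s2 : List (Fin d))
    (hword : ∀ᶠ N in Filter.atTop,
      s1 ++ List.replicate (N - (s1.length + s2.length)) x ++ s2 ∈ L2) :
    ∃ y : Fin d, ‖U x y‖ = 1 := by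
  have hU₁ := entry_norm_bound_of_unitary hU
  by_contra! hne
  have : Nonempty (Fin d) := ⟨x⟩
  obtain ⟨y₀, hy₀⟩ := Finite.exists_max fun y => ‖U x y‖
  have hlam₁ : ‖U x y₀‖ < 1 := (hU₁ x y₀).lt_of_ne (hne y₀)
  obtain ⟨C, k, hC⟩ := hsp1
  set a := s1.length + s2.length
  have hsmall := (tendsto_natCast_add_pow_mul_pow_atTop_nhds_zero (norm_nonneg _) hlam₁
    (c := a + 1) (by positivity) k).const_mul (C : ℝ)
  rw [mul_zero] at hsmall
  obtain ⟨M, hwM, hlt⟩ := (((tendsto_add_atTop_nat a).eventually hword).and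
    (hsmall.eventually_lt_const one_pos)).exists
  rw [show M + a - a = M by omega] at hwM
  set w := s1 ++ List.replicate M x ++ s2
  have hlen : w.length = M + a := by simp [w, a]; omega
  have hcount : M ≤ w.count x := by simp [w, List.count_replicate_self]; omega
  have hS : {v | v ∈ L1 ∧ v.length = w.length}.Finite :=
    (List.finite_length_eq (Fin d) w.length).subset fun v hv => hv.2
  have hone := one_le_ncard_mul_pow_count hU₁ hy₀ x hS
    (by rw [← hrel w, Set.indicator_of_mem hwM])
  have hcard :
      ({v | v ∈ L1 ∧ v.length = w.length}.ncard : ℝ) ≤ C * ((M : ℝ) + (a + 1)) ^ k := by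
    rw [hlen]; exact_mod_cast (hC (M + a)).trans_eq (by ring)
  have hpow : ‖U x y₀‖ ^ w.count x ≤ ‖U x y₀‖ ^ M :=
    pow_le_pow_of_le_one (norm_nonneg _) hlam₁.le hcount
  refine lt_irrefl (1 : ℝ) ?_
  calc 1 ≤ ({v | v ∈ L1 ∧ v.length = w.length}.ncard : ℝ) * ‖U x y₀‖ ^ w.count x :=
        hone
    _ ≤ C * ((M : ℝ) + (a + 1)) ^ k * ‖U x y₀‖ ^ M :=
        mul_le_mul hcard hpow (by positivity) (by positivity)
    _ < 1 := by rwa [mul_assoc]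

/-- If two sparse regular languages satisfy `|L₂^N⟩ = U^{⊗N}|L₁^N⟩` for all `N` with a
fixed unitary `U`, and `L₂` contains words `s₁ x^{N−a} s₂` for all large `N` (so that
`x ∈ Σ∞`), then some matrix element `⟨x|U|y⟩` has modulus one: assuming
`|⟨x|U|y⟩| ≤ λ < 1` for all `y` leads to a contradiction, since
`1 = ⟨s₁ x^{N−a} s₂|U^{⊗N}|L₁^N⟩` is a sum of `O(poly(N))` terms each of modulus at most
`λ^{N−a}`. -/
theorem stmt14 {d : ℕ} (L1 L2 : Set (List (Fin d))) (U : Matrix (Fin d) (Fin d) ℂ)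
    (x : Fin d)
    (hreg1 : RegularLang L1) (hreg2 : RegularLang L2)
    (hsp1 : IsSparse L1) (hsp2 : IsSparse L2)
    (hU : U ∈ Matrix.unitaryGroup (Fin d) ℂ)
    (hrel : ∀ w : List (Fin d),
      L2.indicator (fun _ => (1 : ℂ)) w =
        ∑ᶠ v ∈ {v : List (Fin d) | v ∈ L1 ∧ v.length = w.length},
          ∏ k : Fin w.length, U (w.get k) (v.getD (k : ℕ) x))
    (s1 s2 : List (Fin d))
    (hword : ∀ᶠ N in Filter.atTop,
      s1 ++ List.replicate (N - (s1.length + s2.length)) x ++ s2 ∈ L2) :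
    ∃ y : Fin d, ‖U x y‖ = 1 :=
  stmt14_general L1 L2 U x hsp1 hU hrel s1 s2 hword
end

section
/- Define 6×6 matrices A^0 = I₆, A^1 = |1⟩⟨2| + |4⟩⟨5|, A^2 = |2⟩⟨3| + |5⟩⟨6|, A^3 = |3⟩⟨4|, and X = |4⟩⟨1| + |5⟩⟨2| + |6⟩⟨3|. Then for every N and every word w ∈ {0,1,2,3}^N, Tr[X A^{w_1} ⋯ A^{w_N}] = 1 if w belongs to the language 0*(1 0* 2 0* 3 ∪ 2 0* 3 0* 1 ∪ 3 0* 1 0* 2)0*, and 0 otherwise. -/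
open Matrix

/-- The matrix unit `|i⟩⟨j| = E_{ij}` in `M_6(ℂ)` (0-indexed). -/
noncomputable def E16 (i j : Fin 6) : Matrix (Fin 6) (Fin 6) ℂ :=
  Matrix.single i j 1

/-- `A^0 = I₆`, `A^1 = |1⟩⟨2| + |4⟩⟨5|`, `A^2 = |2⟩⟨3| + |5⟩⟨6|`, `A^3 = |3⟩⟨4|`
(1-indexed kets, hence 0-indexed matrix units). -/
noncomputable def A16 : Fin 4 → Matrix (Fin 6) (Fin 6) ℂ :=
  ![1, E16 0 1 + E16 3 4, E16 1 2 + E16 4 5, E16 2 3]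

/-- `X = |4⟩⟨1| + |5⟩⟨2| + |6⟩⟨3|`. -/
noncomputable def X16 : Matrix (Fin 6) (Fin 6) ℂ := E16 3 0 + E16 4 1 + E16 5 2

/-- `w ∈ 0*(1 0* 2 0* 3 ∪ 2 0* 3 0* 1 ∪ 3 0* 1 0* 2)0*`: deleting the `0`s from `w`
leaves exactly `123`, `231` or `312`. -/
def InCyclicLang (w : List (Fin 4)) : Prop :=
  w.filter (fun a => decide (a ≠ 0)) = [1, 2, 3] ∨
  w.filter (fun a => decide (a ≠ 0)) = [2, 3, 1] ∨
  w.filter (fun a => decide (a ≠ 0)) = [3, 1, 2]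

/-! Each `A^a` with `a ≠ 0` is supported on the first superdiagonal, so a product of `k` of them
is supported on the `k`-th superdiagonal, whereas `Tr[X M] = M₀₃ + M₁₄ + M₂₅` only sees the third.
As `A^0 = 1`, the trace therefore vanishes unless `w` has exactly three nonzero letters `abc`, and
then it is `A^a₀₁A^b₁₂A^c₂₃ + A^a₁₂A^b₂₃A^c₃₄ + A^a₂₃A^b₃₄A^c₄₅`, which is `1` exactly for
`abc ∈ {123, 231, 312}`. -/

theorem List.prod_map_filter_of_eq_one {α M : Type*} [Monoid M] (p : α → Bool) (f : α → M)
    (l : List α) (hf : ∀ a ∈ l, p a = false → f a = 1) :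
    ((l.filter p).map f).prod = (l.map f).prod := by
  induction l with
  | nil => rfl
  | cons a l ih =>
    have ih := ih fun b hb => hf b (List.mem_cons_of_mem a hb)
    cases hp : p a
    · simp [hp, ih, hf a List.mem_cons_self hp]
    · simp [hp, ih]

namespace Matrix

variable {n : ℕ} {R : Type*}

def IsSuperdiagonal [Zero R] (k : ℕ) (M : Matrix (Fin n) (Fin n) R) : Prop :=
  ∀ i j, M i j ≠ 0 → (i : ℕ) + k = j

namespace IsSuperdiagonal

variable {k l : ℕ} {M N : Matrix (Fin n) (Fin n) R}

theorem apply_eq_zero [Zero R] (hM : IsSuperdiagonal k M) {i j : Fin n}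
    (hij : (i : ℕ) + k ≠ j) : M i j = 0 :=
  not_imp_comm.mp (hM i j) hij

theorem add [AddZeroClass R] (hM : IsSuperdiagonal k M) (hN : IsSuperdiagonal k N) :
    IsSuperdiagonal k (M + N) := by
  intro i j hij
  by_contra h
  exact hij (by rw [add_apply, hM.apply_eq_zero h, hN.apply_eq_zero h, add_zero])

theorem mul_apply [NonUnitalNonAssocSemiring R] (hM : IsSuperdiagonal k M) (i m : Fin n)
    (him : (i : ℕ) + k = m) (j : Fin n) : (M * N) i j = M i m * N m j := by
  rw [Matrix.mul_apply, Finset.sum_eq_single m]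
  · intro m' _ hm'
    rw [hM.apply_eq_zero (fun h => hm' (Fin.ext (h.symm.trans him))), zero_mul]
  · simp

theorem mul [NonUnitalNonAssocSemiring R] (hM : IsSuperdiagonal k M)
    (hN : IsSuperdiagonal l N) : IsSuperdiagonal (k + l) (M * N) := by
  intro i j hij
  rw [Matrix.mul_apply] at hij
  obtain ⟨m, -, hm⟩ := Finset.exists_ne_zero_of_sum_ne_zero hij
  rw [← add_assoc, hM i m (left_ne_zero_of_mul hm), hN m j (right_ne_zero_of_mul hm)]

end IsSuperdiagonal

theorem isSuperdiagonal_single [Zero R] {k : ℕ} {i j : Fin n} (hij : (i : ℕ) + k = j)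
    (c : R) : IsSuperdiagonal k (single i j c) := by
  intro i' j' h
  obtain ⟨rfl, rfl⟩ : i = i' ∧ j = j' := by
    by_contra h'
    exact h (single_apply_of_ne _ _ _ _ _ h')
  exact hij

theorem isSuperdiagonal_one [Zero R] [One R] :
    IsSuperdiagonal 0 (1 : Matrix (Fin n) (Fin n) R) := by
  intro i j h
  by_contra h'
  exact h (one_apply_ne fun hij => h' (by simp [hij]))

theorem isSuperdiagonal_list_prod [Semiring R] (L : List (Matrix (Fin n) (Fin n) R))
    (hL : ∀ M ∈ L, IsSuperdiagonal 1 M) : IsSuperdiagonal L.length L.prod := by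
  induction L with
  | nil => exact isSuperdiagonal_one
  | cons M L ih =>
    rw [List.prod_cons, List.length_cons, add_comm]
    exact (hL M List.mem_cons_self).mul (ih fun N hN => hL N (List.mem_cons_of_mem M hN))

end Matrix

open Matrix

theorem isSuperdiagonal_A16 {a : Fin 4} (ha : a ≠ 0) : IsSuperdiagonal 1 (A16 a) := by
  fin_cases a
  · exact absurd rfl ha
  · exact (isSuperdiagonal_single rfl 1).add (isSuperdiagonal_single rfl 1)
  · exact (isSuperdiagonal_single rfl 1).add (isSuperdiagonal_single rfl 1)
  · exact isSuperdiagonal_single rfl 1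

theorem trace_X16_mul (M : Matrix (Fin 6) (Fin 6) ℂ) :
    (X16 * M).trace = M 0 3 + M 1 4 + M 2 5 := by
  simp only [X16, E16, add_mul, trace_add, trace_single_mul, one_smul]

theorem trace_X16_mul_prod_of_length_ne_three {v : List (Fin 4)} (hv : ∀ a ∈ v, a ≠ 0)
    (h3 : v.length ≠ 3) : (X16 * (v.map A16).prod).trace = 0 := by
  have hS := isSuperdiagonal_list_prod (v.map A16) <| by
    simpa using fun a ha => isSuperdiagonal_A16 (hv a ha)
  rw [List.length_map] at hS
  rw [trace_X16_mul, hS.apply_eq_zero, hS.apply_eq_zero, hS.apply_eq_zero] <;> simp <;> omega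

theorem trace_X16_mul_prod_of_length_eq_three {v : List (Fin 4)} (hv : ∀ a ∈ v, a ≠ 0)
    (h3 : v.length = 3) : (X16 * (v.map A16).prod).trace =
      if v = [1, 2, 3] ∨ v = [2, 3, 1] ∨ v = [3, 1, 2] then 1 else 0 := by
  obtain ⟨a, b, c, rfl⟩ := List.length_eq_three.mp h3
  simp only [List.mem_cons, List.not_mem_nil, forall_eq_or_imp] at hv
  obtain ⟨ha, hb, hc, -⟩ := hv
  have hab := (isSuperdiagonal_A16 ha).mul_apply (N := A16 b * A16 c)
  have hbc := (isSuperdiagonal_A16 hb).mul_apply (N := A16 c)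
  simp only [List.map_cons, List.map_nil, List.prod_cons, List.prod_nil, mul_one, trace_X16_mul]
  rw [hab 0 1 rfl, hab 1 2 rfl, hab 2 3 rfl, hbc 1 2 rfl, hbc 2 3 rfl, hbc 3 4 rfl]
  fin_cases a <;> fin_cases b <;> fin_cases c <;> simp_all [A16, E16, single_apply]

theorem prod_map_A16_filter_ne_zero (w : List (Fin 4)) :
    ((w.filter (fun a => decide (a ≠ 0))).map A16).prod = (w.map A16).prod := by
  refine List.prod_map_filter_of_eq_one _ A16 w fun a _ ha => ?_
  rw [decide_eq_false_iff_not, not_not] at ha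
  rw [ha]
  rfl

/-- For every `N` and every word `w ∈ {0,1,2,3}^N`, `Tr[X A^{w_1} ⋯ A^{w_N}]` is `1` if
`w ∈ 0*(1 0* 2 0* 3 ∪ 2 0* 3 0* 1 ∪ 3 0* 1 0* 2)0*` and `0` otherwise. -/
theorem stmt16 (w : List (Fin 4)) :
    (InCyclicLang w → (X16 * (w.map A16).prod).trace = 1) ∧
    (¬ InCyclicLang w → (X16 * (w.map A16).prod).trace = 0) := by
  have hv : ∀ a ∈ w.filter (fun a => decide (a ≠ 0)), a ≠ 0 :=
    fun a ha => of_decide_eq_true (List.mem_filter.mp ha).2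
  rw [← prod_map_A16_filter_ne_zero]
  by_cases h3 : (w.filter (fun a => decide (a ≠ 0))).length = 3
  · rw [trace_X16_mul_prod_of_length_eq_three hv h3]
    exact ⟨fun h => if_pos h, fun h => if_neg h⟩
  · rw [trace_X16_mul_prod_of_length_ne_three hv h3]
    refine ⟨fun h => ?_, fun _ => rfl⟩
    rcases h with h | h | h <;> rw [h] at h3 <;> exact absurd rfl h3
end

section
/- Let L be a regular language over Σ and let shift(L) = {vu : uv ∈ L}. If L is accepted by an NFA with D states, then shift(L) is accepted by an NFA with at most 2D² + 1 states. Moreover, L is shift-invariant if and only if L = shift(L). -/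
/-- The language accepted by the NFA `M`. -/
def accepts {α σ : Type*} (M : FinNFA α σ) : Set (List α) :=
  {w | Nonempty (AcceptingPath M w)}

/-- `shift(L) = {vu : uv ∈ L}`, the set of cyclic rotations of words of `L`. -/
def shiftLang {α : Type*} (L : Set (List α)) : Set (List α) :=
  {w | ∃ u v : List α, w = v ++ u ∧ u ++ v ∈ L}

section chain
variable {α σ τ : Type*}

def chain (M : FinNFA α σ) : σ → List α → σ → Prop
  | s, [], t => s = t
  | s, a :: w, t => ∃ s', s' ∈ M.step s a ∧ chain M s' w t

lemma chain_append {M : FinNFA α σ} {s t : σ} {u v : List α} :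
    chain M s (u ++ v) t ↔ ∃ m, chain M s u m ∧ chain M m v t := by
  induction u generalizing s with
  | nil => simp [chain]
  | cons a u ih =>
    constructor
    · rintro ⟨s', h1, h2⟩
      obtain ⟨m, h2, h3⟩ := ih.mp h2
      exact ⟨m, ⟨s', h1, h2⟩, h3⟩
    · rintro ⟨m, ⟨s', h1, h2⟩, h3⟩
      exact ⟨s', h1, ih.mpr ⟨m, h2, h3⟩⟩

lemma exists_path_iff_chain (M : FinNFA α σ) (w : List α) (s t : σ) :
    (∃ r : Fin (w.length + 1) → σ, r 0 = s ∧ r (Fin.last w.length) = t ∧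
      ∀ k : Fin w.length, r k.succ ∈ M.step (r k.castSucc) (w.get k)) ↔ chain M s w t := by
  induction w generalizing s with
  | nil =>
    constructor
    · rintro ⟨r, h0, h1, -⟩
      show s = t
      rw [← h0, ← h1]; rfl
    · rintro rfl
      exact ⟨fun _ => s, rfl, rfl, fun k => k.elim0⟩
  | cons a w ih =>
    constructor
    · rintro ⟨r, h0, h1, h2⟩
      subst h0
      exact ⟨r ((0 : Fin (w.length + 1)).succ),
        h2 ⟨0, Nat.succ_pos _⟩,
        (ih _).mp ⟨fun i => r i.succ, rfl, h1, fun k => h2 k.succ⟩⟩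
    · rintro ⟨s', hs', hc⟩
      obtain ⟨r, h0, h1, h2⟩ := (ih s').mpr hc
      refine ⟨Fin.cons (α := fun _ => σ) s r, Fin.cons_zero _ _, ?_, ?_⟩
      · show Fin.cons (α := fun _ => σ) s r (Fin.last w.length).succ = t
        rw [Fin.cons_succ]; exact h1
      · intro k
        induction k using Fin.cases with
        | zero =>
          show Fin.cons (α := fun _ => σ) s r ((0 : Fin (w.length + 1)).succ) ∈
            M.step (Fin.cons (α := fun _ => σ) s r 0) a
          rw [Fin.cons_succ, Fin.cons_zero, h0]
          exact hs'
        | succ j =>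
          show Fin.cons (α := fun _ => σ) s r (j.succ).succ ∈
            M.step (Fin.cons (α := fun _ => σ) s r (j.castSucc).succ) (w.get j)
          rw [Fin.cons_succ, Fin.cons_succ]
          exact h2 j

lemma accepts_eq_chain (M : FinNFA α σ) :
    accepts M = {w | ∃ s ∈ M.start, ∃ f ∈ M.accept, chain M s w f} := by
  ext w
  constructor
  · rintro ⟨r, h0, h1, h2⟩
    exact ⟨r 0, h0, r (Fin.last w.length), h1, (exists_path_iff_chain M w _ _).mp ⟨r, rfl, rfl, h2⟩⟩
  · rintro ⟨s, hs, f, hf, hc⟩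
    obtain ⟨r, h0, h1, h2⟩ := (exists_path_iff_chain M w s f).mpr hc
    exact ⟨r, h0.symm ▸ hs, h1.symm ▸ hf, h2⟩

end chain

section shift
variable {α σ : Type*} [DecidableEq σ] [Fintype σ]

/-- Transition relation of the shift NFA. -/
def sRel (M : FinNFA α σ) : Option (σ × σ × Bool) → α → Option (σ × σ × Bool) → Prop
  | none, a, some (q, p, false) => q ∈ M.step p a
  | none, a, some (q, p, true) => p ∈ M.accept ∧ ∃ s ∈ M.start, q ∈ M.step s a
  | some (q, p, false), a, some (q', p', false) => p' = p ∧ q' ∈ M.step q a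
  | some (q, p, false), a, some (q', p', true) =>
      p' = p ∧ q ∈ M.accept ∧ ∃ s ∈ M.start, q' ∈ M.step s a
  | some (q, p, true), a, some (q', p', true) => p' = p ∧ q' ∈ M.step q a
  | _, _, _ => False

instance (M : FinNFA α σ) (s : Option (σ × σ × Bool)) (a : α) :
    DecidablePred (sRel M s a) := by
  rintro (_ | ⟨q, p, _ | _⟩) <;>
    rcases s with _ | ⟨q', p', _ | _⟩ <;>
      simp only [sRel] <;> infer_instance

/-- Accepting predicate of the shift NFA. -/
def sAcc (M : FinNFA α σ) : Option (σ × σ × Bool) → Prop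
  | none => ∃ s ∈ M.start, s ∈ M.accept
  | some (q, p, false) => q ∈ M.accept ∧ p ∈ M.start
  | some (q, p, true) => q = p

instance (M : FinNFA α σ) : DecidablePred (sAcc M) := by
  rintro (_ | ⟨q, p, _ | _⟩) <;> simp only [sAcc] <;> infer_instance

def shiftNFA (M : FinNFA α σ) : FinNFA α (Option (σ × σ × Bool)) where
  step s a := Finset.univ.filter (sRel M s a)
  start := {none}
  accept := Finset.univ.filter (sAcc M)

lemma mem_shiftNFA_step {M : FinNFA α σ} {s t : Option (σ × σ × Bool)} {a : α} :
    t ∈ (shiftNFA M).step s a ↔ sRel M s a t := by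
  simp [shiftNFA]

lemma mem_shiftNFA_accept {M : FinNFA α σ} {t : Option (σ × σ × Bool)} :
    t ∈ (shiftNFA M).accept ↔ sAcc M t := by
  simp [shiftNFA]

lemma chain_shift_false {M : FinNFA α σ} {q f : σ} (p : σ) {v : List α}
    (h : chain M q v f) :
    chain (shiftNFA M) (some (q, p, false)) v (some (f, p, false)) := by
  induction v generalizing q with
  | nil => rw [show q = f from h]; rfl
  | cons a v ih =>
    obtain ⟨q', hq', hc⟩ := h
    exact ⟨some (q', p, false), mem_shiftNFA_step.mpr ⟨rfl, hq'⟩, ih hc⟩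

lemma chain_shift_true {M : FinNFA α σ} {q f : σ} (p : σ) {v : List α}
    (h : chain M q v f) :
    chain (shiftNFA M) (some (q, p, true)) v (some (f, p, true)) := by
  induction v generalizing q with
  | nil => rw [show q = f from h]; rfl
  | cons a v ih =>
    obtain ⟨q', hq', hc⟩ := h
    exact ⟨some (q', p, true), mem_shiftNFA_step.mpr ⟨rfl, hq'⟩, ih hc⟩

lemma chain_shift_true_inv {M : FinNFA α σ} {q p : σ} {w : List α}
    {t : Option (σ × σ × Bool)}
    (h : chain (shiftNFA M) (some (q, p, true)) w t) :
    ∃ q', t = some (q', p, true) ∧ chain M q w q' := by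
  induction w generalizing q with
  | nil => exact ⟨q, (show some (q, p, true) = t from h).symm, rfl⟩
  | cons a w ih =>
    obtain ⟨s', hs', hc⟩ := h
    rw [mem_shiftNFA_step] at hs'
    rcases s' with _ | ⟨q', p', _ | _⟩
    · exact absurd hs' (by simp [sRel])
    · exact absurd hs' (by simp [sRel])
    · obtain ⟨rfl, hstep⟩ := hs'
      obtain ⟨q'', ht, hc'⟩ := ih hc
      exact ⟨q'', ht, q', hstep, hc'⟩

lemma chain_shift_false_inv {M : FinNFA α σ} {q p : σ} {w : List α}
    {t : Option (σ × σ × Bool)}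
    (h : chain (shiftNFA M) (some (q, p, false)) w t) :
    (∃ q', t = some (q', p, false) ∧ chain M q w q') ∨
    (∃ v a u q₁ q₂, w = v ++ a :: u ∧ chain M q v q₁ ∧ q₁ ∈ M.accept ∧
      (∃ s ∈ M.start, q₂ ∈ M.step s a) ∧
      chain (shiftNFA M) (some (q₂, p, true)) u t) := by
  induction w generalizing q with
  | nil => exact Or.inl ⟨q, (show some (q, p, false) = t from h).symm, rfl⟩
  | cons a w ih =>
    obtain ⟨s', hs', hc⟩ := h
    rw [mem_shiftNFA_step] at hs'
    rcases s' with _ | ⟨q', p', _ | _⟩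
    · exact absurd hs' (by simp [sRel])
    · obtain ⟨rfl, hstep⟩ := hs'
      rcases ih hc with ⟨q'', ht, hc'⟩ | ⟨v, b, u, q₁, q₂, rfl, hcv, hacc, hjump, hcu⟩
      · exact Or.inl ⟨q'', ht, q', hstep, hc'⟩
      · exact Or.inr ⟨a :: v, b, u, q₁, q₂, rfl, ⟨q', hstep, hcv⟩, hacc, hjump, hcu⟩
    · obtain ⟨rfl, hacc, hjump⟩ := hs'
      exact Or.inr ⟨[], a, w, q, q', rfl, rfl, hacc, hjump, hc⟩

end shift

section correct
variable {α σ τ : Type*} [DecidableEq σ] [Fintype σ]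

lemma shiftNFA_correct (M : FinNFA α σ) :
    accepts (shiftNFA M) = shiftLang (accepts M) := by
  rw [accepts_eq_chain, accepts_eq_chain (M := M)]
  ext w
  constructor
  · rintro ⟨s₀, hs₀, f, hf, hc⟩
    have hs : s₀ = none := by
      simpa [shiftNFA] using hs₀
    subst hs
    rw [mem_shiftNFA_accept] at hf
    cases w with
    | nil =>
      have : (none : Option (σ × σ × Bool)) = f := hc
      subst this
      obtain ⟨s, hs, hacc⟩ := hf
      exact ⟨[], [], rfl, s, hs, s, hacc, rfl⟩
    | cons a w =>
      obtain ⟨s₁, hs₁, hc⟩ := hc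
      rw [mem_shiftNFA_step] at hs₁
      rcases s₁ with _ | ⟨q, p, _ | _⟩
      · exact absurd hs₁ (by simp [sRel])
      · -- first step simulates from the guess p
        rcases chain_shift_false_inv hc with
          ⟨q', rfl, hc'⟩ | ⟨v, b, u, q₁, q₂, rfl, hcv, hacc, ⟨s, hs, hq₂⟩, hcu⟩
        · obtain ⟨hq', hp⟩ := hf
          refine ⟨[], a :: w, by simp, p, hp, q', hq', q, hs₁, hc'⟩
        · obtain ⟨q₃, rfl, hcu'⟩ := chain_shift_true_inv hcu
          have hq₃ : q₃ = p := hf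
          rw [hq₃] at hcu'
          refine ⟨b :: u, a :: v, by simp, s, hs, q₁, hacc, ?_⟩
          exact chain_append.mpr ⟨p, ⟨q₂, hq₂, hcu'⟩, q, hs₁, hcv⟩
      · -- first step is the jump
        obtain ⟨hp, s, hs, hq⟩ := hs₁
        obtain ⟨q₃, rfl, hc'⟩ := chain_shift_true_inv hc
        have hq₃ : q₃ = p := hf
        rw [hq₃] at hc'
        refine ⟨a :: w, [], by simp, s, hs, p, hp, q, hq, ?_⟩
        show chain M q (w ++ []) p
        rw [List.append_nil]
        exact hc'
  · rintro ⟨u, v, rfl, s, hs, f, hf, hc⟩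
    rw [chain_append] at hc
    obtain ⟨p, hcu, hcv⟩ := hc
    have hstart : (none : Option (σ × σ × Bool)) ∈ (shiftNFA M).start := by
      simp [shiftNFA]
    cases v with
    | nil =>
      have hpf : p = f := hcv
      subst hpf
      cases u with
      | nil =>
        have hsp : s = p := hcu
        subst hsp
        exact ⟨none, hstart, none, mem_shiftNFA_accept.mpr ⟨s, hs, hf⟩, rfl⟩
      | cons a u =>
        obtain ⟨q, hq, hc'⟩ := hcu
        refine ⟨none, hstart, some (p, p, true), mem_shiftNFA_accept.mpr rfl, ?_⟩
        exact ⟨some (q, p, true), mem_shiftNFA_step.mpr ⟨hf, s, hs, hq⟩,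
          chain_shift_true p hc'⟩
    | cons b v =>
      obtain ⟨q, hq, hcv'⟩ := hcv
      cases u with
      | nil =>
        have hsp : s = p := hcu
        subst hsp
        refine ⟨none, hstart, some (f, s, false),
          mem_shiftNFA_accept.mpr ⟨hf, hs⟩, ?_⟩
        have : (b :: v) ++ ([] : List α) = b :: v := by simp
        rw [this]
        exact ⟨some (q, s, false), mem_shiftNFA_step.mpr hq, chain_shift_false s hcv'⟩
      | cons a u =>
        obtain ⟨q₂, hq₂, hcu'⟩ := hcu
        refine ⟨none, hstart, some (p, p, true), mem_shiftNFA_accept.mpr rfl, ?_⟩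
        refine ⟨some (q, p, false), mem_shiftNFA_step.mpr hq, ?_⟩
        exact chain_append.mpr ⟨some (f, p, false), chain_shift_false p hcv',
          some (q₂, p, true), mem_shiftNFA_step.mpr ⟨rfl, hf, s, hs, hq₂⟩,
          chain_shift_true p hcu'⟩

end correct

section map
variable {α σ τ : Type*} [DecidableEq τ]

def mapNFA (e : σ ≃ τ) (M : FinNFA α σ) : FinNFA α τ where
  step t a := (M.step (e.symm t) a).image e
  start := M.start.image e
  accept := M.accept.image e

lemma mem_image_equiv {s : Finset σ} {e : σ ≃ τ} {x : τ} :
    x ∈ s.image e ↔ e.symm x ∈ s := by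
  simp only [Finset.mem_image]
  constructor
  · rintro ⟨y, hy, rfl⟩; simpa
  · intro h; exact ⟨e.symm x, h, by simp⟩

lemma chain_mapNFA {e : σ ≃ τ} {M : FinNFA α σ} {s t : τ} {w : List α} :
    chain (mapNFA e M) s w t ↔ chain M (e.symm s) w (e.symm t) := by
  induction w generalizing s with
  | nil =>
    constructor
    · rintro (rfl : s = t); rfl
    · intro (h : e.symm s = e.symm t); exact e.symm.injective h
  | cons a w ih =>
    constructor
    · rintro ⟨s', hs', hc⟩
      exact ⟨e.symm s', mem_image_equiv.mp hs', ih.mp hc⟩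
    · rintro ⟨s', hs', hc⟩
      refine ⟨e s', mem_image_equiv.mpr (by simpa), ?_⟩
      rw [ih]
      simpa

lemma accepts_mapNFA (e : σ ≃ τ) (M : FinNFA α σ) :
    accepts (mapNFA e M) = accepts M := by
  rw [accepts_eq_chain, accepts_eq_chain]
  ext w
  constructor
  · rintro ⟨s, hs, f, hf, hc⟩
    exact ⟨e.symm s, mem_image_equiv.mp hs, e.symm f, mem_image_equiv.mp hf,
      chain_mapNFA.mp hc⟩
  · rintro ⟨s, hs, f, hf, hc⟩
    exact ⟨e s, mem_image_equiv.mpr (by simpa), e f, mem_image_equiv.mpr (by simpa),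
      chain_mapNFA.mpr (by simpa)⟩

end map

/-- If `L` is accepted by an NFA with `D` states, then `shift(L)` is accepted by an NFA
with at most `2D² + 1` states; moreover `L` is shift-invariant iff `L = shift(L)`. -/
theorem stmt19 {d D : ℕ} (M : FinNFA (Fin d) (Fin D)) :
    (∃ n ≤ 2 * D ^ 2 + 1, ∃ M' : FinNFA (Fin d) (Fin n),
        accepts M' = shiftLang (accepts M)) ∧
      ((∀ u v : List (Fin d), u ++ v ∈ accepts M → v ++ u ∈ accepts M) ↔
        accepts M = shiftLang (accepts M)) := by
  constructor
  · refine ⟨2 * D ^ 2 + 1, le_refl _, ?_⟩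
    have hcard : Fintype.card (Option (Fin D × Fin D × Bool)) = 2 * D ^ 2 + 1 := by
      simp [Fintype.card_option, Fintype.card_prod]
      ring
    let e : Option (Fin D × Fin D × Bool) ≃ Fin (2 * D ^ 2 + 1) :=
      Fintype.equivFinOfCardEq hcard
    exact ⟨mapNFA e (shiftNFA M), by rw [accepts_mapNFA, shiftNFA_correct]⟩
  · constructor
    · intro h
      ext w
      constructor
      · intro hw
        exact ⟨w, [], rfl, by simpa using hw⟩
      · rintro ⟨u, v, rfl, huv⟩
        exact h u v huv
    · intro h u v huv
      rw [h]
      exact ⟨u, v, rfl, huv⟩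
end
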